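/- arXiv:math/0302301 — 4 statements merged into one kernel-verified Lean document; each statement's English description precedes it below -/
import Mathlib

section
/- The number of elements of the alternating group A_{n+1} whose A-canonical presentation contains exactly ℓ occurrences of a_1^{±1} equals 2^ℓ · c(n, ℓ+1); equivalently, Σ_{ℓ ≥ 0} |{v ∈ A_{n+1} : del_A(v) = ℓ}| t^ℓ = (2t+1)(2t+2)···(2t+n-1). -/
open scoped Classical
open Finset

noncomputable section

/-- `sgen n i` is the adjacent transposition `s_i = (i, i+1)` (1-indexed) in `S_n`,
realized as a permutation of `Fin n` (positions `1,…,n` correspond to `0,…,n-1`). -/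
def sgen (n i : ℕ) : Equiv.Perm (Fin n) :=
  if h : 1 ≤ i ∧ i < n then Equiv.swap ⟨i - 1, by omega⟩ ⟨i, h.2⟩ else 1

/-- `agen n i` is the generator `a_i = s_1 s_{i+1}` of the alternating group. -/
def agen (n i : ℕ) : Equiv.Perm (Fin n) := sgen n 1 * sgen n (i + 1)

/-- The descending product `s_j s_{j-1} ⋯ s_k` (equal to `1` when `k = j+1`). -/
def dProd (n j k : ℕ) : Equiv.Perm (Fin n) :=
  ((List.range (j + 1 - k)).map fun t => sgen n (j - t)).prod

/-- The descending product `a_j a_{j-1} ⋯ a_k` (equal to `1` when `k = j+1`). -/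
def aDProd (n j k : ℕ) : Equiv.Perm (Fin n) :=
  ((List.range (j + 1 - k)).map fun t => agen n (j - t)).prod

/-- `R^S_j = {1, s_j, s_j s_{j-1}, …, s_j s_{j-1} ⋯ s_1}`. -/
def RS (n j : ℕ) : Set (Equiv.Perm (Fin n)) :=
  { w | ∃ k, 1 ≤ k ∧ k ≤ j + 1 ∧ w = dProd n j k }

/-- `R^S_j` as a finite set. -/
def RSfin (n j : ℕ) : Finset (Equiv.Perm (Fin n)) :=
  (Finset.range (j + 1)).image fun k => dProd n j (k + 1)

/-- `R^A_j = {1, a_j, a_j a_{j-1}, …, a_j ⋯ a_2, a_j ⋯ a_2 a_1, a_j ⋯ a_2 a_1⁻¹}`. -/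
def RA (n j : ℕ) : Set (Equiv.Perm (Fin n)) :=
  { v | (∃ k, 1 ≤ k ∧ k ≤ j + 1 ∧ v = aDProd n j k) ∨ v = aDProd n j 2 * (agen n 1)⁻¹ }

/-- The element of `R^A_j` with code `k`:
`k = 0` encodes `a_j ⋯ a_2 a_1⁻¹`, and `k ≥ 1` encodes `a_j ⋯ a_k`. -/
def elemA (n j k : ℕ) : Equiv.Perm (Fin n) :=
  if k = 0 then aDProd n j 2 * (agen n 1)⁻¹ else aDProd n j k

/-- `k : Fin (n-1) → ℕ` codes the S-canonical presentation of `w`: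
the `j`-th factor is `s_{j+1} s_j ⋯ s_{k j} ∈ R^S_{j+1}` (`k j = j + 2` codes `1`). -/
def isCanonS (n : ℕ) (w : Equiv.Perm (Fin n)) (k : Fin (n - 1) → ℕ) : Prop :=
  (∀ j : Fin (n - 1), 1 ≤ k j ∧ k j ≤ (j : ℕ) + 2) ∧
    (List.ofFn fun j : Fin (n - 1) => dProd n ((j : ℕ) + 1) (k j)).prod = w

/-- The code of the S-canonical presentation of `w` (it is unique when it exists). -/
def kvecS (n : ℕ) (w : Equiv.Perm (Fin n)) : Fin (n - 1) → ℕ :=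
  if h : ∃ k, isCanonS n w k then h.choose else fun _ => 0

/-- `del_S w` : the number of occurrences of `s_1` in the S-canonical presentation of `w`
(the factor from `R^S_{j+1}` contains `s_1` exactly when its code is `1`). -/
def delS (n : ℕ) (w : Equiv.Perm (Fin n)) : ℕ :=
  (Finset.univ.filter fun j : Fin (n - 1) => kvecS n w j = 1).card

/-- `k : Fin (m-2) → ℕ` codes the A-canonical presentation of `v ∈ A_m`:
the `j`-th factor is `elemA m (j+1) (k j) ∈ R^A_{j+1}`. -/
def isCanonA (m : ℕ) (v : Equiv.Perm (Fin m)) (k : Fin (m - 2) → ℕ) : Prop :=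
  (∀ j : Fin (m - 2), k j ≤ (j : ℕ) + 2) ∧
    (List.ofFn fun j : Fin (m - 2) => elemA m ((j : ℕ) + 1) (k j)).prod = v

/-- The code of the A-canonical presentation of `v`. -/
def kvecA (m : ℕ) (v : Equiv.Perm (Fin m)) : Fin (m - 2) → ℕ :=
  if h : ∃ k, isCanonA m v k then h.choose else fun _ => 0

/-- `del_A v` : the number of occurrences of `a_1^{±1}` in the A-canonical presentation
(codes `0` and `1` are the two factors containing `a_1^{±1}`). -/
def delA (m : ℕ) (v : Equiv.Perm (Fin m)) : ℕ :=
  (Finset.univ.filter fun j : Fin (m - 2) => kvecA m v j ≤ 1).card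

/-- `ℓ_A v` : the total number of letters `a_i^{±1}` in the A-canonical presentation:
the factor of `R^A_{j+1}` with code `0` has `j+1` letters, the one with code `k ≥ 1`
has `j + 2 - k` letters. -/
def lenA (m : ℕ) (v : Equiv.Perm (Fin m)) : ℕ :=
  ∑ j : Fin (m - 2), if kvecA m v j = 0 then (j : ℕ) + 1 else (j : ℕ) + 2 - kvecA m v j

/-- `ℓ_S w` : the number of inversions of `w`. -/
def invS {n : ℕ} (w : Equiv.Perm (Fin n)) : ℕ :=
  (Finset.univ.filter fun p : Fin n × Fin n => p.1 < p.2 ∧ w p.2 < w p.1).card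

/-- The (1-indexed) descent set `Des_S(σ) = {1 ≤ i ≤ n-1 : σ(i) > σ(i+1)}`. -/
def Des1 {n : ℕ} (σ : Equiv.Perm (Fin n)) : Finset ℕ :=
  (Finset.Ico 1 n).filter fun i => ∃ h : i < n, σ ⟨i, h⟩ < σ ⟨i - 1, by omega⟩

/-- `rmaj_{S_m}(σ) = ∑_{i ∈ Des_S(σ)} (m - i)`. -/
def rmaj1 {n : ℕ} (m : ℕ) (σ : Equiv.Perm (Fin n)) : ℕ := ∑ i ∈ Des1 σ, (m - i)

/-- `maj_S(σ) = ∑_{i ∈ Des_S(σ)} i`. -/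
def maj1 {n : ℕ} (σ : Equiv.Perm (Fin n)) : ℕ := ∑ i ∈ Des1 σ, i

/-- `Del_S(σ)` : the (1-indexed) positions `1 < i ≤ n` which are left-to-right minima:
`σ(i) < σ(j)` for all `j < i`. -/
def DelSet {n : ℕ} (σ : Equiv.Perm (Fin n)) : Finset ℕ :=
  (Finset.Icc 2 n).filter fun i =>
    ∃ h : i - 1 < n, ∀ j : Fin n, (j : ℕ) < i - 1 → σ ⟨i - 1, h⟩ < σ j

/-- `del_S(σ)` computed combinatorially: the number of left-to-right minima of `σ`
other than the first position. -/
def delC {n : ℕ} (σ : Equiv.Perm (Fin n)) : ℕ := (DelSet σ).card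

/-- The Gaussian (q-)binomial coefficient, via the q-Pascal recursion. -/
def qbinom {R : Type*} [CommRing R] (q : R) : ℕ → ℕ → R
  | _, 0 => 1
  | 0, _ + 1 => 0
  | n + 1, k + 1 => qbinom q n k + q ^ (k + 1) * qbinom q n (k + 1)

end

namespace Stmt13Aux
open Equiv Equiv.Perm

variable {m : ℕ}

lemma sgen_val (i : ℕ) (p : Fin m) :
    ((sgen m i) p).val =
      if 1 ≤ i ∧ i < m then
        (if p.val = i - 1 then i else if p.val = i then i - 1 else p.val)
      else p.val := by
  unfold sgen
  split
  · rw [Equiv.swap_apply_def]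
    simp only [Fin.eq_mk_iff_val_eq]
    split_ifs <;> simp <;> omega
  · simp_all

lemma sgen_apply (i : ℕ) (p : Fin m) (h1 : 1 ≤ i) (h2 : i < m) (q : Fin m)
    (hq : q.val = if p.val = i - 1 then i else if p.val = i then i - 1 else p.val) :
    (sgen m i) p = q := by
  apply Fin.ext; rw [sgen_val]; simp only [h1, h2, and_self, if_true, true_and]; omega

lemma agen_apply_self (i : ℕ) (h1 : 1 ≤ i) (h2 : i + 1 < m) (p : Fin m) (hp : p.val = i) :
    (agen m i) p = ⟨i + 1, h2⟩ := by
  unfold agen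
  rw [Equiv.Perm.mul_apply]
  rw [sgen_apply (i+1) p (by omega) h2 ⟨i+1, h2⟩ (by simp; split_ifs <;> omega)]
  exact sgen_apply 1 _ (le_refl _) (by omega) _ (by simp; omega)

lemma agen_fix (i : ℕ) (h1 : 1 ≤ i) (p : Fin m) (hp : i + 1 < p.val) : agen m i p = p := by
  unfold agen
  rw [Equiv.Perm.mul_apply]
  have h2 : (1:ℕ) < m := by omega
  rcases Nat.lt_or_ge (i+1) m with hm | hm
  · rw [sgen_apply (i+1) p (by omega) hm p (by simp; split_ifs <;> omega)]
    exact sgen_apply 1 p (le_refl _) h2 p (by simp; split_ifs <;> omega)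
  · have : sgen m (i+1) = 1 := by unfold sgen; rw [dif_neg]; omega
    rw [this]
    exact sgen_apply 1 p (le_refl _) h2 p (by simp; split_ifs <;> omega)

lemma agen_one_apply_two (hm : 3 ≤ m) :
    (agen m 1) ⟨2, by omega⟩ = ⟨0, by omega⟩ := by
  unfold agen
  rw [Equiv.Perm.mul_apply]
  rw [sgen_apply 2 _ (by omega) (by omega) ⟨1, by omega⟩ (by simp)]
  exact sgen_apply 1 _ (le_refl _) (by omega) _ (by simp)

end Stmt13Aux

namespace Stmt13Aux
open Equiv Equiv.Perm

variable {m : ℕ}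

lemma list_prod_fix (l : List (Equiv.Perm (Fin m))) (p : Fin m) (h : ∀ g ∈ l, g p = p) :
    l.prod p = p := by
  induction l with
  | nil => simp
  | cons g l ih =>
      rw [List.prod_cons, Equiv.Perm.mul_apply, ih (fun g hg => h g (List.mem_cons_of_mem _ hg))]
      exact h g List.mem_cons_self

lemma aDProd_empty (J k : ℕ) (h : J + 1 ≤ k) : aDProd m J k = 1 := by
  unfold aDProd
  rw [show J + 1 - k = 0 by omega]
  simp

lemma aDProd_succ (J k : ℕ) (h : k ≤ J + 1) :
    aDProd m (J + 1) k = agen m (J + 1) * aDProd m J k := by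
  unfold aDProd
  rw [show J + 1 + 1 - k = (J + 1 - k) + 1 by omega]
  have h2 : List.map ((fun t => agen m (J + 1 - t)) ∘ Nat.succ) (List.range (J + 1 - k))
      = List.map (fun t => agen m (J - t)) (List.range (J + 1 - k)) := by
    apply List.map_congr_left
    intro t _
    show agen m (J + 1 - (t + 1)) = agen m (J - t)
    congr 1
    omega
  rw [List.range_succ_eq_map, List.map_cons, List.map_map, h2, List.prod_cons]
  norm_num

lemma aDProd_fix (J c : ℕ) (hc : 1 ≤ c) (p : Fin m) (hp : J + 2 ≤ p.val) :
    aDProd m J c p = p := by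
  apply list_prod_fix
  intro g hg
  simp only [List.mem_map, List.mem_range] at hg
  obtain ⟨t, ht, rfl⟩ := hg
  exact agen_fix (J - t) (by omega) p (by omega)

lemma aDProd_apply_val :
    ∀ J c : ℕ, ∀ p : Fin m, 1 ≤ c → c ≤ J → J + 1 < m → p.val = c →
      ((aDProd m J c) p).val = J + 1 := by
  intro J
  induction J with
  | zero => intro c p h1 h2 h3 hp; omega
  | succ J ih =>
      intro c p h1 h2 h3 hp
      rw [aDProd_succ J c (by omega), Equiv.Perm.mul_apply]
      rcases Nat.lt_or_ge c (J + 1) with hcJ | hcJ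
      · have hv := ih c p h1 (by omega) (by omega) hp
        have : (aDProd m J c) p = ⟨J + 1, by omega⟩ := Fin.ext hv
        rw [this]
        have := agen_apply_self (J + 1) (by omega) h3 ⟨J + 1, by omega⟩ rfl
        rw [this]
      · have hcJ' : c = J + 1 := by omega
        subst hcJ'
        rw [aDProd_empty J (J + 1) (le_refl _)]
        simp only [Equiv.Perm.one_apply]
        have := agen_apply_self (J + 1) (by omega) h3 p hp
        rw [this]

lemma elemA_fix (J c : ℕ) (hJ : 1 ≤ J) (p : Fin m) (hp : J + 2 ≤ p.val) :
    elemA m J c p = p := by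
  unfold elemA
  split
  · rw [Equiv.Perm.mul_apply]
    have h1 : agen m 1 p = p := agen_fix 1 (le_refl _) p (by omega)
    have h2 : (agen m 1)⁻¹ p = p := by
      apply Equiv.injective (agen m 1)
      rw [Equiv.Perm.coe_inv, Equiv.apply_symm_apply]
      exact h1.symm
    rw [h2]
    exact aDProd_fix J 2 (by omega) p hp
  · exact aDProd_fix J c (by omega) p hp

lemma elemA_apply_code (J c : ℕ) (hJ : 1 ≤ J) (hc : c ≤ J + 1) (hm : J + 1 < m) :
    elemA m J c ⟨c, by omega⟩ = ⟨J + 1, hm⟩ := by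
  unfold elemA
  rcases Nat.eq_zero_or_pos c with rfl | hc1
  · rw [if_pos rfl, Equiv.Perm.mul_apply]
    have h0 : (agen m 1) ⟨2, by omega⟩ = ⟨0, by omega⟩ := agen_one_apply_two (by omega)
    have h0' : (agen m 1)⁻¹ ⟨0, by omega⟩ = ⟨2, by omega⟩ := by
      apply Equiv.injective (agen m 1)
      rw [Equiv.Perm.coe_inv, Equiv.apply_symm_apply]
      exact h0.symm
    rw [h0']
    rcases Nat.lt_or_ge 1 J with hJ2 | hJ2
    · exact Fin.ext (aDProd_apply_val J 2 _ (by omega) (by omega) hm rfl)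
    · have : J = 1 := by omega
      subst this
      rw [aDProd_empty 1 2 (by omega)]
      rfl
  · rw [if_neg (by omega)]
    rcases Nat.lt_or_ge c (J + 1) with hcJ | hcJ
    · exact Fin.ext (aDProd_apply_val J c _ hc1 (by omega) hm rfl)
    · have : c = J + 1 := by omega
      subst this
      rw [aDProd_empty J (J + 1) (le_refl _)]
      rfl

lemma sign_sgen (i : ℕ) (h1 : 1 ≤ i) (h2 : i < m) : Equiv.Perm.sign (sgen m i) = -1 := by
  unfold sgen
  rw [dif_pos ⟨h1, h2⟩, Equiv.Perm.sign_swap (by simp [Fin.ext_iff]; omega)]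

lemma sign_agen (i : ℕ) (h1 : 1 ≤ i) (h2 : i + 1 < m) : Equiv.Perm.sign (agen m i) = 1 := by
  unfold agen
  rw [map_mul, sign_sgen 1 (le_refl _) (by omega), sign_sgen (i + 1) (by omega) h2]
  decide

lemma sign_aDProd (J c : ℕ) (hc : 1 ≤ c) (hJ : J + 1 < m) :
    Equiv.Perm.sign (aDProd m J c) = 1 := by
  unfold aDProd
  rw [map_list_prod]
  apply List.prod_eq_one
  intro x hx
  simp only [List.map_map, List.mem_map, List.mem_range] at hx
  obtain ⟨t, ht, rfl⟩ := hx
  exact sign_agen (J - t) (by omega) (by omega)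

lemma sign_elemA (J c : ℕ) (hJ : 1 ≤ J) (hm : J + 1 < m) :
    Equiv.Perm.sign (elemA m J c) = 1 := by
  unfold elemA
  split
  · rw [map_mul, map_inv, sign_aDProd J 2 (by omega) hm, sign_agen 1 (le_refl _) (by omega)]
    decide
  · exact sign_aDProd J c (by omega) hm

end Stmt13Aux

namespace Stmt13Aux
open Equiv Equiv.Perm

variable {m : ℕ}

/-- The product of the first `r` canonical factors with codes `k`. -/
noncomputable def prodF (m r : ℕ) (k : ℕ → ℕ) : Equiv.Perm (Fin m) :=
  ((List.range r).map fun j => elemA m (j + 1) (k j)).prod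

lemma prodF_zero (k : ℕ → ℕ) : prodF m 0 k = 1 := by
  unfold prodF; simp

lemma prodF_succ (r : ℕ) (k : ℕ → ℕ) :
    prodF m (r + 1) k = prodF m r k * elemA m (r + 1) (k r) := by
  unfold prodF
  rw [List.range_succ, List.map_append, List.prod_append]
  simp

lemma prodF_fix (r : ℕ) (k : ℕ → ℕ) (p : Fin m) (hp : r + 2 ≤ p.val) :
    prodF m r k p = p := by
  apply list_prod_fix
  intro g hg
  simp only [List.mem_map, List.mem_range] at hg
  obtain ⟨j, hj, rfl⟩ := hg
  exact elemA_fix (j + 1) (k j) (by omega) p (by omega)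

lemma prodF_apply_top (r : ℕ) (k : ℕ → ℕ) (hk : k r ≤ r + 2) (hm : r + 3 ≤ m) :
    prodF m (r + 1) k ⟨k r, by omega⟩ = ⟨r + 2, by omega⟩ := by
  rw [prodF_succ, Equiv.Perm.mul_apply]
  rw [elemA_apply_code (r + 1) (k r) (by omega) (by omega) (by omega)]
  exact prodF_fix r k _ (by simp)

lemma prodF_inj :
    ∀ r : ℕ, r + 2 ≤ m → ∀ k k' : ℕ → ℕ,
      (∀ j, j < r → k j ≤ j + 2) → (∀ j, j < r → k' j ≤ j + 2) →
      prodF m r k = prodF m r k' → ∀ j, j < r → k j = k' j := by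
  intro r
  induction r with
  | zero => intro _ _ _ _ _ _ j hj; omega
  | succ r ih =>
      intro hm k k' hk hk' heq j hj
      have hm3 : r + 3 ≤ m := by omega
      have h1 : prodF m (r + 1) k ⟨k r, by have := hk r (by omega); omega⟩ = ⟨r + 2, by omega⟩ :=
        prodF_apply_top r k (hk r (by omega)) hm3
      have h2 : prodF m (r + 1) k' ⟨k' r, by have := hk' r (by omega); omega⟩ = ⟨r + 2, by omega⟩ :=
        prodF_apply_top r k' (hk' r (by omega)) hm3
      rw [heq] at h1
      have hkr : k r = k' r := by
        have := Equiv.injective (prodF m (r + 1) k') (h1.trans h2.symm)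
        exact congrArg Fin.val this
      have heq' : prodF m r k = prodF m r k' := by
        have e1 := prodF_succ (m := m) r k
        have e2 := prodF_succ (m := m) r k'
        rw [e1, e2, hkr] at heq
        exact mul_right_cancel heq
      rcases Nat.lt_or_ge j r with hjr | hjr
      · exact ih (by omega) k k' (fun i hi => hk i (by omega)) (fun i hi => hk' i (by omega))
          heq' j hjr
      · have : j = r := by omega
        subst this
        exact hkr

end Stmt13Aux

namespace Stmt13Aux
open Equiv Equiv.Perm Finset

lemma ofFn_prod_eq_prodF {m : ℕ} (r : ℕ) (f : ℕ → ℕ) :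
    (List.ofFn fun j : Fin r => elemA m ((j : ℕ) + 1) (f j)).prod = prodF m r f := by
  induction r with
  | zero => rw [prodF_zero]; simp
  | succ r ih =>
      rw [List.ofFn_succ', List.concat_eq_append, List.prod_append, prodF_succ, ← ih]
      simp [Fin.last]

/-- Extension of a code on `Fin (n-1)` to `ℕ`. -/
noncomputable def extk (n : ℕ) (k : Fin (n - 1) → ℕ) : ℕ → ℕ :=
  fun j => if h : j < n - 1 then k ⟨j, h⟩ else 0

/-- The canonical product map. -/
noncomputable def Phi (n : ℕ) (k : Fin (n - 1) → ℕ) : Equiv.Perm (Fin (n + 1)) :=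
  prodF (n + 1) (n - 1) (extk n k)

/-- The set of codes. -/
noncomputable def Cset (n : ℕ) : Finset (Fin (n - 1) → ℕ) :=
  Fintype.piFinset fun j => Finset.range ((j : ℕ) + 3)

lemma mem_Cset {n : ℕ} {k : Fin (n - 1) → ℕ} :
    k ∈ Cset n ↔ ∀ j : Fin (n - 1), k j ≤ (j : ℕ) + 2 := by
  unfold Cset
  rw [Fintype.mem_piFinset]
  constructor <;> intro h j <;> have := h j <;> simp only [Finset.mem_range] at * <;> omega

lemma extk_bounds {n : ℕ} {k : Fin (n - 1) → ℕ} (hk : ∀ j : Fin (n - 1), k j ≤ (j : ℕ) + 2) :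
    ∀ j, j < n - 1 → extk n k j ≤ j + 2 := by
  intro j hj
  unfold extk
  rw [dif_pos hj]
  exact hk ⟨j, hj⟩

lemma ofFn_eq_Phi (n : ℕ) (k : Fin (n - 1) → ℕ) :
    (List.ofFn fun j : Fin (n - 1) => elemA (n + 1) ((j : ℕ) + 1) (k j)).prod = Phi n k := by
  have : (fun j : Fin (n - 1) => elemA (n + 1) ((j : ℕ) + 1) (k j))
      = fun j : Fin (n - 1) => elemA (n + 1) ((j : ℕ) + 1) (extk n k (j : ℕ)) := by
    funext j
    unfold extk
    rw [dif_pos j.isLt, Fin.eta]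
  rw [this, ofFn_prod_eq_prodF]
  rfl

lemma isCanonA_Phi (n : ℕ) (k : Fin (n - 1) → ℕ) (hk : k ∈ Cset n) :
    isCanonA (n + 1) (Phi n k) k :=
  ⟨fun j => mem_Cset.mp hk j, ofFn_eq_Phi n k⟩

lemma kvecA_Phi (n : ℕ) (hn : 1 ≤ n) (k : Fin (n - 1) → ℕ) (hk : k ∈ Cset n) :
    kvecA (n + 1) (Phi n k) = k := by
  unfold kvecA
  have hex : ∃ k', isCanonA (n + 1) (Phi n k) k' := ⟨k, isCanonA_Phi n k hk⟩
  rw [dif_pos hex]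
  obtain ⟨hb, hp⟩ := hex.choose_spec
  have hPhi : Phi n hex.choose = Phi n k := (ofFn_eq_Phi n hex.choose).symm.trans hp
  have hp' : prodF (n + 1) (n - 1) (extk n hex.choose) = prodF (n + 1) (n - 1) (extk n k) := hPhi
  funext j
  have hj : (j : ℕ) < n - 1 := by have := j.isLt; omega
  have := prodF_inj (m := n + 1) (n - 1) (by omega) (extk n hex.choose) (extk n k)
    (extk_bounds fun j => hb j) (extk_bounds (mem_Cset.mp hk)) hp' (j : ℕ) hj
  unfold extk at this
  rw [dif_pos hj, dif_pos hj] at this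
  exact this

lemma delA_Phi (n : ℕ) (hn : 1 ≤ n) (k : Fin (n - 1) → ℕ) (hk : k ∈ Cset n) :
    delA (n + 1) (Phi n k) = (Finset.univ.filter fun j : Fin (n - 1) => k j ≤ 1).card := by
  unfold delA
  rw [kvecA_Phi n hn k hk]
  rfl

lemma Phi_injOn (n : ℕ) (hn : 1 ≤ n) : Set.InjOn (Phi n) (Cset n) := by
  intro k hk k' hk' h
  funext j
  have := prodF_inj (m := n + 1) (n - 1) (by omega) (extk n k) (extk n k')
    (extk_bounds (mem_Cset.mp hk)) (extk_bounds (mem_Cset.mp hk')) h (j : ℕ) j.isLt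
  unfold extk at this
  rw [dif_pos j.isLt, dif_pos j.isLt] at this
  exact this

lemma Phi_mem_alternating (n : ℕ) (hn : 1 ≤ n) (k : Fin (n - 1) → ℕ) :
    Phi n k ∈ alternatingGroup (Fin (n + 1)) := by
  rw [Equiv.Perm.mem_alternatingGroup]
  unfold Phi prodF
  rw [map_list_prod]
  apply List.prod_eq_one
  intro x hx
  simp only [List.map_map, List.mem_map, List.mem_range] at hx
  obtain ⟨j, hj, rfl⟩ := hx
  exact sign_elemA (j + 1) _ (by omega) (by omega)

lemma two_mul_prod_eq_factorial : ∀ n : ℕ, 1 ≤ n →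
    2 * ∏ j ∈ Finset.range (n - 1), (j + 3) = Nat.factorial (n + 1) := by
  intro n
  induction n with
  | zero => omega
  | succ n ih =>
      intro _
      rcases Nat.eq_zero_or_pos n with rfl | hn
      · simp [Nat.factorial]
      · have h1 : n + 1 - 1 = (n - 1) + 1 := by omega
        rw [h1, Finset.prod_range_succ, show n - 1 + 3 = n + 2 by omega,
          ← Nat.mul_assoc, ih hn, Nat.factorial_succ (n + 1)]
        ring

end Stmt13Aux

namespace Stmt13Aux
open Equiv Equiv.Perm Finset

lemma card_Cset (n : ℕ) : (Cset n).card = ∏ j ∈ Finset.range (n - 1), (j + 3) := by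
  unfold Cset
  rw [Fintype.card_piFinset]
  rw [← Fin.prod_univ_eq_prod_range (fun j => j + 3) (n - 1)]
  apply Finset.prod_congr rfl
  intro j _
  rw [Finset.card_range]

lemma card_filter_alternating (n : ℕ) (hn : 1 ≤ n) :
    (Finset.univ.filter fun v : Equiv.Perm (Fin (n + 1)) =>
        v ∈ alternatingGroup (Fin (n + 1))).card = (Cset n).card := by
  have hnt : Nontrivial (Fin (n + 1)) := by
    apply Fin.nontrivial_iff_two_le.mpr
    omega
  have h1 : 2 * (Finset.univ.filter fun v : Equiv.Perm (Fin (n + 1)) =>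
      v ∈ alternatingGroup (Fin (n + 1))).card = Nat.factorial (n + 1) := by
    have h0 := two_mul_card_alternatingGroup (α := Fin (n + 1))
    rw [Fintype.card_perm, Fintype.card_fin] at h0
    rw [← Fintype.card_subtype]
    convert h0 using 3
  have h2 : 2 * (Cset n).card = Nat.factorial (n + 1) := by
    rw [card_Cset]
    exact two_mul_prod_eq_factorial n hn
  omega

lemma image_Phi (n : ℕ) (hn : 1 ≤ n) :
    (Cset n).image (Phi n) = Finset.univ.filter fun v : Equiv.Perm (Fin (n + 1)) =>
      v ∈ alternatingGroup (Fin (n + 1)) := by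
  apply Finset.eq_of_subset_of_card_le
  · intro v hv
    rw [Finset.mem_image] at hv
    obtain ⟨k, hk, rfl⟩ := hv
    rw [Finset.mem_filter]
    exact ⟨Finset.mem_univ _, Phi_mem_alternating n hn k⟩
  · rw [card_filter_alternating n hn, Finset.card_image_of_injOn (Phi_injOn n hn)]

end Stmt13Aux


/-- `∑_ℓ #{v ∈ A_{n+1} : del_A(v) = ℓ} t^ℓ = (2t+1)(2t+2)⋯(2t+n-1)`. -/
theorem stmt13 (n : ℕ) (R : Type*) [CommRing R] (t : R) :
    ∑ ℓ ∈ Finset.range (n + 2),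
        ((Finset.univ.filter fun v : Equiv.Perm (Fin (n + 1)) =>
            v ∈ alternatingGroup (Fin (n + 1)) ∧ delA (n + 1) v = ℓ).card : R) * t ^ ℓ =
      ∏ j ∈ Finset.range (n - 1), (2 * t + ((j + 1 : ℕ) : R)) := by
  open Stmt13Aux in
  rcases Nat.eq_zero_or_pos n with rfl | hn
  · have hsub : ∀ v : Equiv.Perm (Fin 1), v = 1 := fun v => Subsingleton.elim v 1
    have hA : ∀ v : Equiv.Perm (Fin 1), v ∈ alternatingGroup (Fin 1) := by
      intro v; rw [hsub v]; exact one_mem _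
    have hdel : ∀ v : Equiv.Perm (Fin 1), delA 1 v = 0 := by
      intro v
      unfold delA
      have h := Finset.card_filter_le (Finset.univ : Finset (Fin (1 - 2)))
        (fun j => kvecA 1 v j ≤ 1)
      rw [Finset.card_univ, Fintype.card_fin] at h
      omega
    rw [Finset.sum_range_succ, Finset.sum_range_succ, Finset.sum_range_zero]
    have e0 : (Finset.univ.filter fun v : Equiv.Perm (Fin 1) =>
        v ∈ alternatingGroup (Fin 1) ∧ delA 1 v = 0) = Finset.univ := by
      apply Finset.filter_true_of_mem
      intro v _
      exact ⟨hA v, hdel v⟩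
    have e1 : (Finset.univ.filter fun v : Equiv.Perm (Fin 1) =>
        v ∈ alternatingGroup (Fin 1) ∧ delA 1 v = 1) = ∅ := by
      apply Finset.filter_false_of_mem
      intro v _ h
      have := hdel v
      omega
    rw [e0, e1]
    have hcard : (Finset.univ : Finset (Equiv.Perm (Fin 1))).card = 1 := by
      rw [Finset.card_univ, Fintype.card_perm, Fintype.card_fin]
      rfl
    rw [hcard]
    norm_num
  · have hmaps : ∀ v ∈ (Finset.univ.filter fun v : Equiv.Perm (Fin (n + 1)) =>
        v ∈ alternatingGroup (Fin (n + 1))), delA (n + 1) v ∈ Finset.range (n + 2) := by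
      intro v _
      rw [Finset.mem_range]
      unfold delA
      have h := Finset.card_filter_le (Finset.univ : Finset (Fin (n + 1 - 2)))
        (fun j => kvecA (n + 1) v j ≤ 1)
      rw [Finset.card_univ, Fintype.card_fin] at h
      omega
    have hsum : ∀ r : ℕ, ∑ c ∈ Finset.range (r + 3), (if c ≤ 1 then t else (1 : R))
        = 2 * t + ((r + 1 : ℕ) : R) := by
      intro r
      rw [Finset.sum_ite, Finset.sum_const, Finset.sum_const]
      have hf : Finset.filter (fun c => c ≤ 1) (Finset.range (r + 3)) = Finset.range 2 := by
        ext c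
        simp only [Finset.mem_filter, Finset.mem_range]
        omega
      have hcard2 : (Finset.filter (fun c => ¬ c ≤ 1) (Finset.range (r + 3))).card = r + 1 := by
        have htot := Finset.card_filter_add_card_filter_not
          (s := Finset.range (r + 3)) (p := fun c => c ≤ 1)
        rw [hf, Finset.card_range, Finset.card_range] at htot
        omega
      rw [hf, hcard2, Finset.card_range]
      simp only [nsmul_eq_mul, mul_one]
      push_cast
      ring
    calc
      ∑ ℓ ∈ Finset.range (n + 2),
          ((Finset.univ.filter fun v : Equiv.Perm (Fin (n + 1)) =>
              v ∈ alternatingGroup (Fin (n + 1)) ∧ delA (n + 1) v = ℓ).card : R) * t ^ ℓ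
        = ∑ ℓ ∈ Finset.range (n + 2),
            ∑ v ∈ (Finset.univ.filter fun v : Equiv.Perm (Fin (n + 1)) =>
              v ∈ alternatingGroup (Fin (n + 1))).filter (fun v => delA (n + 1) v = ℓ),
              t ^ delA (n + 1) v := by
          apply Finset.sum_congr rfl
          intro ℓ _
          rw [Finset.filter_filter, Finset.sum_congr rfl
            (fun v hv => by rw [(Finset.mem_filter.mp hv).2.2]), Finset.sum_const, nsmul_eq_mul]
      _ = ∑ v ∈ (Finset.univ.filter fun v : Equiv.Perm (Fin (n + 1)) =>
            v ∈ alternatingGroup (Fin (n + 1))), t ^ delA (n + 1) v :=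
          Finset.sum_fiberwise_of_maps_to hmaps _
      _ = ∑ k ∈ Cset n, t ^ delA (n + 1) (Phi n k) := by
          rw [← image_Phi n hn]
          exact Finset.sum_image fun x hx y hy h => Phi_injOn n hn hx hy h
      _ = ∑ k ∈ Cset n, ∏ j : Fin (n - 1), (if k j ≤ 1 then t else 1) := by
          apply Finset.sum_congr rfl
          intro k hk
          rw [delA_Phi n hn k hk, Finset.prod_ite, Finset.prod_const, Finset.prod_const_one,
            mul_one]
      _ = ∏ j : Fin (n - 1), ∑ c ∈ Finset.range ((j : ℕ) + 3), (if c ≤ 1 then t else 1) := by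
          rw [Finset.prod_univ_sum]
          rfl
      _ = ∏ j : Fin (n - 1), (2 * t + (((j : ℕ) + 1 : ℕ) : R)) := by
          apply Finset.prod_congr rfl
          intro j _
          exact hsum (j : ℕ)
      _ = ∏ j ∈ Finset.range (n - 1), (2 * t + ((j + 1 : ℕ) : R)) :=
          Fin.prod_univ_eq_prod_range (fun j => 2 * t + ((j + 1 : ℕ) : R)) (n - 1)
end

section
/- Let x_1, ..., x_n, y be integers with x_i < y for all i, u = [x_1,...,x_n], and for 1 ≤ i ≤ n+1 let v_i = [x_1,...,x_{i-1}, y, x_i,...,x_n] be the sequence obtained by inserting y in position i. Then Σ_{i=1}^{n+1} q^{rmaj(v_i)} = q^{rmaj(u)} (1 + q + ... + q^n), where for a sequence of length m, rmaj = Σ_{i ∈ Des} (m - i) and Des is the set of positions i with the i-th entry greater than the (i+1)-st. -/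
/-!
Insert the maximal letter `y` into the gap `i ∈ {0, …, n}` of `u` (descents are labelled by
gaps, 1-indexed). Descents of `u` left of `i` move one step further from the end, those right of
`i` keep their distance, a descent in gap `i` is destroyed and one in gap `i + 1` is created.
Hence `rmaj` grows by `c(i) = #{d ∈ Des u | d < i} + (if i ∈ Des u then 0 else n - i)`.
On `Des u`, `c` is the rank within `Des u`, taking the values `0, …, |Des u| - 1`; on the other
gaps it is `n` minus the rank among them, taking the values `n, …, |Des u|`. So `c` permutes
`{0, …, n}`.
-/

open scoped Classical
open Finset

/-- The 1-indexed descent set of a sequence of integers. -/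
def Des1Seq {m : ℕ} (f : Fin m → ℤ) : Finset ℕ :=
  (Finset.Ico 1 m).filter fun i => ∃ h : i < m, f ⟨i, h⟩ < f ⟨i - 1, by omega⟩

/-- The reverse major index `rmaj(f) = ∑_{i ∈ Des(f)} (m - i)` of a length-`m` sequence. -/
noncomputable def rmajSeq {m : ℕ} (f : Fin m → ℤ) : ℕ := ∑ i ∈ Des1Seq f, (m - i)

theorem Finset.sum_insert_eq_add_ite {ι M : Type*} [DecidableEq ι] [AddCommMonoid M]
    (s : Finset ι) (a : ι) (f : ι → M) :
    ∑ x ∈ insert a s, f x = ∑ x ∈ s, f x + if a ∈ s then 0 else f a := by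
  split_ifs with ha
  · rw [insert_eq_of_mem ha, add_zero]
  · rw [sum_insert ha, add_comm]

theorem Finset.sum_card_filter_lt {α M : Type*} [LinearOrder α] [AddCommMonoid M]
    (s : Finset α) (f : ℕ → M) :
    ∑ a ∈ s, f #{b ∈ s | b < a} = ∑ k ∈ range #s, f k := by
  have hmono : StrictMonoOn (fun a => #{b ∈ s | b < a}) s := by
    intro a ha a' _ h
    refine card_lt_card ⟨fun b hb => ?_, fun hsub => ?_⟩
    · exact mem_filter.2 ⟨(mem_filter.1 hb).1, (mem_filter.1 hb).2.trans h⟩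
    · exact lt_irrefl a (mem_filter.1 (hsub (mem_filter.2 ⟨ha, h⟩))).2
  have himage : s.image (fun a => #{b ∈ s | b < a}) = range #s := by
    refine eq_of_subset_of_card_le (fun k hk => ?_) ?_
    · obtain ⟨a, ha, rfl⟩ := mem_image.1 hk
      exact mem_range.2 (card_lt_card (filter_ssubset.2 ⟨a, ha, lt_irrefl a⟩))
    · rw [card_range, card_image_of_injOn hmono.injOn]
  rw [← himage, sum_image hmono.injOn]

theorem Finset.sum_range_add_sum_range_reflect {M : Type*} [AddCommMonoid M] (f : ℕ → M)
    {a n : ℕ} (ha : a ≤ n + 1) :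
    ∑ k ∈ range a, f k + ∑ k ∈ range (n + 1 - a), f (n - k) = ∑ k ∈ range (n + 1), f k := by
  generalize hb : n + 1 - a = b
  rw [show n + 1 = a + b by omega, sum_range_add, ← sum_range_reflect (fun k => f (a + k))]
  refine congrArg _ (sum_congr rfl fun k hk => ?_)
  have := mem_range.1 hk
  congr 1
  omega

theorem Finset.card_filter_lt_add_card_filter_lt_range_sdiff (D : Finset ℕ) {n i : ℕ}
    (hi : i ≤ n + 1) :
    #{j ∈ D | j < i} + #{j ∈ range (n + 1) \ D | j < i} = i := by
  conv_rhs => rw [← card_range i, ← card_filter_add_card_filter_not (· ∈ D)]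
  congr 2 <;> ext j <;> simp only [mem_filter, mem_sdiff, mem_range]
  · exact and_comm
  · constructor
    · rintro ⟨⟨-, hj⟩, hji⟩
      exact ⟨hji, hj⟩
    · rintro ⟨hji, hj⟩
      exact ⟨⟨by omega, hj⟩, hji⟩

def rmajIncrement (D : Finset ℕ) (n i : ℕ) : ℕ :=
  #{j ∈ D | j < i} + if i ∈ D then 0 else n - i

theorem sum_rmajIncrement {M : Type*} [AddCommMonoid M] (f : ℕ → M) {D : Finset ℕ} {n : ℕ}
    (hD : D ⊆ range (n + 1)) :
    ∑ i ∈ range (n + 1), f (rmajIncrement D n i) = ∑ k ∈ range (n + 1), f k := by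
  set K := range (n + 1) \ D with hKdef
  have hK : #K = n + 1 - #D := by rw [card_sdiff_of_subset hD, card_range]
  have on_D : ∑ i ∈ D, f (rmajIncrement D n i) = ∑ i ∈ D, f #{j ∈ D | j < i} :=
    sum_congr rfl fun i hi => by rw [rmajIncrement, if_pos hi, add_zero]
  have on_K : ∑ i ∈ K, f (rmajIncrement D n i) = ∑ i ∈ K, f (n - #{j ∈ K | j < i}) := by
    refine sum_congr rfl fun i hi => ?_
    obtain ⟨hi_range, hiD⟩ := mem_sdiff.1 hi
    have hin : i < n + 1 := mem_range.1 hi_range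
    have hsplit := card_filter_lt_add_card_filter_lt_range_sdiff D hin.le
    rw [← hKdef] at hsplit
    rw [rmajIncrement, if_neg hiD]
    congr 1
    omega
  rw [← sum_sdiff hD, on_D, on_K, sum_card_filter_lt, sum_card_filter_lt (f := fun k => f (n - k)),
    hK, add_comm, sum_range_add_sum_range_reflect f ((card_le_card hD).trans_eq (card_range _))]

namespace Fin

variable {α : Type*} {n : ℕ} (x : Fin n → α) (y : α) (i : Fin (n + 1))

theorem insertNth_apply_mk_of_lt {k : ℕ} (hk : k < i) :
    (insertNth i y x : Fin (n + 1) → α) ⟨k, by omega⟩ = x ⟨k, by omega⟩ := by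
  rw [insertNth_apply_below (by exact hk), eq_rec_constant]
  rfl

theorem insertNth_apply_mk_of_gt {k : ℕ} (hk : i < k) (hkn : k < n + 1) :
    (insertNth i y x : Fin (n + 1) → α) ⟨k, hkn⟩ = x ⟨k - 1, by omega⟩ := by
  rw [insertNth_apply_above (by exact hk), eq_rec_constant]
  rfl

end Fin

theorem mem_des1Seq {m : ℕ} (f : Fin m → ℤ) (p : ℕ) :
    p ∈ Des1Seq f ↔ ∃ h : p < m, 1 ≤ p ∧ f ⟨p, h⟩ < f ⟨p - 1, by omega⟩ := by
  simp only [Des1Seq, mem_filter, mem_Ico]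
  exact ⟨fun ⟨⟨h1, _⟩, h⟩ => h.imp fun _ h' => ⟨h1, h'⟩, fun ⟨hm, h1, h⟩ => ⟨⟨h1, hm⟩, hm, h⟩⟩

section InsertMax

variable {n : ℕ} {x : Fin n → ℤ} {y : ℤ}

open Fin in
theorem des1Seq_insertNth (hxy : ∀ j, x j < y) (i : Fin (n + 1)) :
    Des1Seq (insertNth i y x : Fin (n + 1) → ℤ) =
      {a ∈ insert (i : ℕ) (Des1Seq x) | a < n}.image
        fun a : ℕ => if a < (i : ℕ) then a else a + 1 := by
  ext p
  simp only [mem_image, mem_filter, mem_insert, mem_des1Seq]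
  constructor
  · rintro ⟨hp, hp1, hdes⟩
    rcases lt_trichotomy p i with hpi | rfl | hpi
    · rw [insertNth_apply_mk_of_lt x y i hpi, insertNth_apply_mk_of_lt x y i (by omega)] at hdes
      exact ⟨p, ⟨.inr ⟨by omega, hp1, hdes⟩, by omega⟩, if_pos hpi⟩
    · rw [insertNth_apply_same, insertNth_apply_mk_of_lt x y _ (by omega)] at hdes
      exact absurd hdes (hxy _).not_gt
    · rcases (Nat.succ_le_of_lt hpi).eq_or_lt with rfl | hpi'
      · exact ⟨i, ⟨.inl rfl, by omega⟩, if_neg (lt_irrefl _)⟩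
      · rw [insertNth_apply_mk_of_gt x y i hpi, insertNth_apply_mk_of_gt x y i (by omega)] at hdes
        exact ⟨p - 1, ⟨.inr ⟨by omega, by omega, hdes⟩, by omega⟩, by rw [if_neg (by omega)]; omega⟩
  · rintro ⟨a, ⟨ha, han⟩, rfl⟩
    by_cases hai : a = i
    · subst hai
      simp only [lt_irrefl, if_false, Nat.add_sub_cancel]
      refine ⟨by omega, by omega, ?_⟩
      rw [insertNth_apply_mk_of_gt x y i (by omega), insertNth_apply_same]
      exact hxy _
    obtain ⟨ha, ha1, hdes⟩ := ha.resolve_left hai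
    split_ifs with hai'
    · refine ⟨by omega, ha1, ?_⟩
      rwa [insertNth_apply_mk_of_lt x y i hai', insertNth_apply_mk_of_lt x y i (by omega)]
    · simp only [Nat.add_sub_cancel]
      refine ⟨by omega, by omega, ?_⟩
      rwa [insertNth_apply_mk_of_gt x y i (by omega), insertNth_apply_mk_of_gt x y i (by omega)]

theorem rmajSeq_insertNth (hxy : ∀ j, x j < y) (i : Fin (n + 1)) :
    rmajSeq (Fin.insertNth i y x : Fin (n + 1) → ℤ) =
      rmajSeq x + rmajIncrement (Des1Seq x) n i := by
  set E := {a ∈ insert (i : ℕ) (Des1Seq x) | a < n}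
  have hinj : Set.InjOn (fun a : ℕ => if a < (i : ℕ) then a else a + 1) E := by
    intro a _ b _ hab
    simp only at hab
    split_ifs at hab <;> omega
  have hterm : ∀ a ∈ E,
      n + 1 - (if a < (i : ℕ) then a else a + 1) = (n - a) + if a < (i : ℕ) then 1 else 0 := by
    intro a ha
    have := (mem_filter.1 ha).2
    split_ifs <;> omega
  have hleft : {a ∈ E | a < (i : ℕ)} = {j ∈ Des1Seq x | j < (i : ℕ)} := by
    ext a
    simp only [E, mem_filter, mem_insert]
    constructor
    · rintro ⟨⟨rfl | ha, -⟩, hai⟩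
      · exact absurd hai (lt_irrefl _)
      · exact ⟨ha, hai⟩
    · rintro ⟨ha, hai⟩
      exact ⟨⟨.inr ha, by omega⟩, hai⟩
  rw [rmajSeq, des1Seq_insertNth hxy, sum_image hinj, sum_congr rfl hterm, sum_add_distrib,
    ← card_filter, hleft, sum_filter_of_ne fun a _ h => by omega, sum_insert_eq_add_ite,
    rmajIncrement, rmajSeq]
  ring

end InsertMax

/-- Inserting a maximal letter `y` in all `n+1` positions of `u = [x_1,…,x_n]`:
`∑_{i=1}^{n+1} q^{rmaj(v_i)} = q^{rmaj(u)} (1 + q + ⋯ + q^n)`. -/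
theorem stmt14 (n : ℕ) (x : Fin n → ℤ) (y : ℤ) (hxy : ∀ i, x i < y)
    (R : Type*) [CommRing R] (q : R) :
    ∑ i : Fin (n + 1), q ^ rmajSeq (Fin.insertNth i y x) =
      q ^ rmajSeq x * ∑ i ∈ Finset.range (n + 1), q ^ i := by
  have hD : Des1Seq x ⊆ range (n + 1) := fun p hp =>
    mem_range.2 (((mem_des1Seq x p).1 hp).elim fun h _ => Nat.lt_succ_of_lt h)
  calc ∑ i : Fin (n + 1), q ^ rmajSeq (Fin.insertNth i y x)
      = ∑ i ∈ range (n + 1), q ^ rmajSeq x * q ^ rmajIncrement (Des1Seq x) n i := by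
        rw [← Fin.sum_univ_eq_sum_range]
        exact sum_congr rfl fun i _ => by rw [rmajSeq_insertNth hxy, pow_add]
    _ = q ^ rmajSeq x * ∑ i ∈ range (n + 1), q ^ i := by
        rw [← mul_sum, sum_rmajIncrement (q ^ ·) hD]
end

section
/- Let 1 ≤ i ≤ n-1 and let π ∈ S_n with supp(π) ⊆ [i]. Then summing over all {i}-shuffles r (i.e. all r ∈ S_n with Des_S(r^{-1}) ⊆ {i}): Σ_r q^{rmaj_{S_n}(π r) - rmaj_{S_i}(π)} = Σ_r q^{ℓ_S(π r) - ℓ_S(π)} = [n choose i]_q, the q-binomial coefficient. -/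
open scoped Classical
open Finset

namespace Stmt16Aux
variable {R : Type*} [CommRing R]

lemma qbinom_zero (q : R) (n : ℕ) : qbinom q n 0 = 1 := by cases n <;> rfl

lemma qbinom_succ (q : R) (n k : ℕ) :
    qbinom q (n + 1) (k + 1) = qbinom q n k + q ^ (k + 1) * qbinom q n (k + 1) := rfl

lemma qbinom_of_lt (q : R) : ∀ n k : ℕ, n < k → qbinom q n k = 0 := by
  intro n
  induction n with
  | zero => intro k hk; match k, hk with | k + 1, _ => rfl
  | succ n ih =>
    intro k hk
    match k, hk with
    | k + 1, hk =>
      rw [qbinom_succ, ih k (by omega), ih (k + 1) (by omega)]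
      ring

lemma qbinom_self (q : R) (n : ℕ) : qbinom q n n = 1 := by
  induction n with
  | zero => rfl
  | succ n ih => rw [qbinom_succ, ih, qbinom_of_lt q n (n + 1) (by omega)]; ring

lemma qbinom_succ' (q : R) : ∀ n k : ℕ,
    qbinom q (n + 1) (k + 1) = q ^ (n - k) * qbinom q n k + qbinom q n (k + 1) := by
  intro n
  induction n with
  | zero =>
    intro k
    match k with
    | 0 => simp [qbinom_succ, qbinom_zero, qbinom_of_lt q 0 1 (by omega)]
    | k + 1 =>
      rw [qbinom_succ, qbinom_of_lt q 0 (k + 1) (by omega),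
        qbinom_of_lt q 0 (k + 2) (by omega)]
      ring
  | succ n ih =>
    intro k
    match k with
    | 0 =>
      have h1 := qbinom_succ q (n + 1) 0
      have h2 := qbinom_succ q n 0
      have h3 := ih 0
      have h4 := qbinom_zero q n
      have h5 := qbinom_zero q (n + 1)
      simp only [Nat.sub_zero] at h3 ⊢
      linear_combination h1 - h2 + q * h3 + (q ^ (n + 1) - 1) * h4 - (q ^ (n + 1) - 1) * h5
    | k + 1 =>
      by_cases hnk : k + 1 ≤ n
      · have h1 := qbinom_succ q (n + 1) (k + 1)
        have h2 := ih k
        have h3 := ih (k + 1)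
        have h4 := qbinom_succ q n k
        have h5 := qbinom_succ q n (k + 1)
        have he1 : n - k = n - (k + 1) + 1 := by omega
        have he2 : n + 1 - (k + 1) = n - (k + 1) + 1 := by omega
        rw [he1] at h2
        rw [he2]
        set e := n - (k + 1) with hedef
        linear_combination h1 + h2 + q ^ (k + 2) * h3 - q ^ (e + 1) * h4 - h5
      · have hn : n ≤ k := by omega
        rcases eq_or_lt_of_le hn with rfl | hlt2
        · rw [qbinom_self, qbinom_self, qbinom_of_lt q (n + 1) (n + 1 + 1) (by omega)]
          have : n + 1 - (n + 1) = 0 := by omega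
          rw [this]
          ring
        · rw [qbinom_of_lt q (n + 1) (k + 1) (by omega),
            qbinom_of_lt q (n + 1) (k + 1 + 1) (by omega),
            qbinom_of_lt q (n + 1 + 1) (k + 1 + 1) (by omega)]
          ring

/-- Finset of monotone lists of given length, entries in `[p, M]`. -/
def monoLists (M : ℕ) : ℕ → ℕ → Finset (List ℕ)
  | 0, _ => {[]}
  | k + 1, p => (Finset.Icc p M).biUnion fun t => (monoLists M k t).image (List.cons t)

lemma length_of_mem_monoLists {M : ℕ} : ∀ {k p l}, l ∈ monoLists M k p → l.length = k := by
  intro k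
  induction k with
  | zero => intro p l hl; simp [monoLists] at hl; simp [hl]
  | succ k ih =>
    intro p l hl
    simp only [monoLists, Finset.mem_biUnion, Finset.mem_image] at hl
    obtain ⟨t, _, l', hl', rfl⟩ := hl
    simp [ih hl']

lemma sum_monoLists_succ {M k p : ℕ} (f : List ℕ → R) :
    ∑ l ∈ monoLists M (k + 1) p, f l
      = ∑ t ∈ Finset.Icc p M, ∑ l' ∈ monoLists M k t, f (t :: l') := by
  rw [show monoLists M (k + 1) p
      = (Finset.Icc p M).biUnion fun t => (monoLists M k t).image (List.cons t) from rfl]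
  rw [Finset.sum_biUnion]
  · refine Finset.sum_congr rfl fun t _ => ?_
    rw [Finset.sum_image]
    intro a _ b _ h
    exact (List.cons.injEq _ _ _ _ ▸ h).2
  · intro a _ b _ hab
    simp only [Function.onFun, Finset.disjoint_left]
    intro l hla hlb
    simp only [Finset.mem_image] at hla hlb
    obtain ⟨la, _, rfl⟩ := hla
    obtain ⟨lb, _, h⟩ := hlb
    exact hab ((List.cons.injEq _ _ _ _ ▸ h).1.symm)

/-- The rmaj-difference statistic on a chain. -/
def Dstat (M : ℕ) : List Bool → List ℕ → ℕ → ℕ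
  | e :: es, t :: ts, p =>
      (if e then M - t else if p < t then M + (ts.length + 1) - t else 0) + Dstat M es ts t
  | _, _, _ => 0

lemma Dstat_nil (M : ℕ) (l : List ℕ) (p : ℕ) : Dstat M [] l p = 0 := by
  cases l <;> rfl

lemma Dstat_cons (M : ℕ) (e : Bool) (es : List Bool) (t : ℕ) (ts : List ℕ) (p : ℕ) :
    Dstat M (e :: es) (t :: ts) p
      = (if e then M - t else if p < t then M + (ts.length + 1) - t else 0)
          + Dstat M es ts t := rfl

lemma sum_D (q : R) : ∀ (N : ℕ) (es : List Bool) (M p : ℕ), p ≤ M → M - p + es.length ≤ N →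
    ∑ l ∈ monoLists M es.length p, q ^ Dstat M es l p
      = qbinom q (M - p + es.length) es.length := by
  intro N
  induction N with
  | zero =>
    intro es M p hpM hN
    have h1 : es = [] := List.length_eq_zero_iff.mp (by omega)
    subst h1
    simp only [List.length_nil, monoLists, Finset.sum_singleton, Dstat_nil, pow_zero]
    rw [qbinom_zero]
  | succ N ih =>
    intro es M p hpM hN
    match es with
    | [] =>
      simp only [List.length_nil, monoLists, Finset.sum_singleton, Dstat_nil, pow_zero]
      rw [qbinom_zero]
    | e :: es' =>
      rw [List.length_cons, sum_monoLists_succ]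
      rcases eq_or_lt_of_le hpM with rfl | hlt
      · -- p = M
        rw [Finset.Icc_self, Finset.sum_singleton]
        have hcalc : ∀ l' ∈ monoLists p es'.length p,
            q ^ Dstat p (e :: es') (p :: l') p = q ^ Dstat p es' l' p := by
          intro l' _
          rw [Dstat_cons]
          have : (if e then p - p else if p < p then p + (l'.length + 1) - p else 0) = 0 := by
            cases e <;> simp
          rw [this, zero_add]
        rw [Finset.sum_congr rfl hcalc, ih es' p p le_rfl (by simp at hN ⊢; omega)]
        simp only [Nat.sub_self, Nat.zero_add, zero_add]
        rw [qbinom_self, qbinom_self]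
      · -- p < M
        have hsplit : Finset.Icc p M = insert p (Finset.Icc (p + 1) M) := by
          rw [Finset.Icc_add_one_left_eq_Ioc, Finset.Ioc_insert_left hpM]
        rw [hsplit, Finset.sum_insert (by simp)]
        -- head term
        have hhead : ∑ l' ∈ monoLists M es'.length p, q ^ Dstat M (e :: es') (p :: l') p
            = (if e then q ^ (M - p) else 1) * qbinom q (M - p + es'.length) es'.length := by
          rw [← ih es' M p hpM (by simp at hN ⊢; omega), Finset.mul_sum]
          refine Finset.sum_congr rfl fun l' _ => ?_
          rw [Dstat_cons]
          have : (if e then M - p else if p < p then M + (l'.length + 1) - p else 0)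
              = if e then M - p else 0 := by cases e <;> simp
          rw [this]
          cases e <;> simp [pow_add]
        -- tail term
        have htail : ∑ t ∈ Finset.Icc (p + 1) M, ∑ l' ∈ monoLists M es'.length t,
              q ^ Dstat M (e :: es') (t :: l') p
            = (if e then 1 else q ^ (es'.length + 1)) *
                qbinom q (M - p + es'.length) (es'.length + 1) := by
          have hbase : ∑ t ∈ Finset.Icc (p + 1) M, ∑ l' ∈ monoLists M es'.length t,
                q ^ Dstat M (true :: es') (t :: l') (p + 1)
              = qbinom q (M - p + es'.length) (es'.length + 1) := by
            have := ih (true :: es') M (p + 1) hlt (by simp at hN ⊢; omega)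
            rw [List.length_cons, sum_monoLists_succ] at this
            rw [this]
            congr 1
            omega
          rw [← hbase, Finset.mul_sum]
          refine Finset.sum_congr rfl fun t ht => ?_
          rw [Finset.mul_sum]
          refine Finset.sum_congr rfl fun l' hl' => ?_
          rw [Dstat_cons, Dstat_cons]
          have hlen : l'.length = es'.length := length_of_mem_monoLists hl'
          simp only [Finset.mem_Icc] at ht
          have ht1 : p < t := by omega
          have hife : (if true = true then M - t
              else if p + 1 < t then M + (l'.length + 1) - t else 0) = M - t := by simp
          rw [hife]
          cases e with
          | true => simp
          | false =>
            simp only [Bool.false_eq_true, if_false, if_pos ht1, one_mul]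
            rw [← pow_add, hlen]
            congr 1
            omega
        rw [hhead, htail]
        cases e with
        | true =>
          simp only [if_pos trivial, eq_self_iff_true, if_true, one_mul]
          rw [show M - p + (es'.length + 1) = M - p + es'.length + 1 from by omega,
            qbinom_succ' q (M - p + es'.length) es'.length,
            show M - p + es'.length - es'.length = M - p from by omega]
          try ring
        | false =>
          simp only [Bool.false_eq_true, if_false]
          rw [show M - p + (es'.length + 1) = M - p + es'.length + 1 by omega,
            qbinom_succ q (M - p + es'.length) es'.length]
          ring

lemma sum_T (q : R) : ∀ (N k M p : ℕ), p ≤ M → M - p + k ≤ N →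
    ∑ l ∈ monoLists M k p, q ^ l.sum = q ^ (k * p) * qbinom q (M - p + k) k := by
  intro N
  induction N with
  | zero =>
    intro k M p hpM hN
    have hk : k = 0 := by omega
    subst hk
    simp [monoLists, qbinom_zero]
  | succ N ih =>
    intro k M p hpM hN
    match k with
    | 0 => simp [monoLists, qbinom_zero]
    | k + 1 =>
      rw [sum_monoLists_succ]
      rcases eq_or_lt_of_le hpM with rfl | hlt
      · rw [Finset.Icc_self, Finset.sum_singleton]
        have : ∀ l' ∈ monoLists p k p, q ^ (p :: l').sum = q ^ p * q ^ l'.sum := by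
          intro l' _; rw [List.sum_cons, pow_add]
        rw [Finset.sum_congr rfl this, ← Finset.mul_sum, ih k p p le_rfl (by omega)]
        simp only [Nat.sub_self, Nat.zero_add, qbinom_self, mul_one]
        ring
      · have hsplit : Finset.Icc p M = insert p (Finset.Icc (p + 1) M) := by
          rw [Finset.Icc_add_one_left_eq_Ioc, Finset.Ioc_insert_left hpM]
        rw [hsplit, Finset.sum_insert (by simp)]
        have hhead : ∑ l' ∈ monoLists M k p, q ^ (p :: l').sum
            = q ^ p * (q ^ (k * p) * qbinom q (M - p + k) k) := by
          rw [← ih k M p hpM (by omega), Finset.mul_sum]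
          exact Finset.sum_congr rfl fun l' _ => by rw [List.sum_cons, pow_add]
        have htail : ∑ t ∈ Finset.Icc (p + 1) M, ∑ l' ∈ monoLists M k t, q ^ (t :: l').sum
            = q ^ ((k + 1) * (p + 1)) * qbinom q (M - p - 1 + (k + 1)) (k + 1) := by
          have := ih (k + 1) M (p + 1) hlt (by omega)
          rw [sum_monoLists_succ] at this
          rw [this, show M - (p + 1) + (k + 1) = M - p - 1 + (k + 1) from by omega]
        rw [hhead, htail]
        have harith : M - p - 1 + (k + 1) = M - p + k := by omega
        rw [harith, show M - p + (k + 1) = M - p + k + 1 from by omega,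
          qbinom_succ q (M - p + k) k]
        ring



noncomputable section

variable {n : ℕ}

lemma mem_Des1 {σ : Equiv.Perm (Fin n)} {j : ℕ} (hj : j < n) :
    j ∈ Des1 σ ↔ 1 ≤ j ∧ σ ⟨j, hj⟩ < σ ⟨j - 1, by omega⟩ := by
  unfold Des1
  rw [Finset.mem_filter, Finset.mem_Ico]
  constructor
  · rintro ⟨⟨h1, _⟩, ⟨h, hd⟩⟩
    exact ⟨h1, hd⟩
  · rintro ⟨h1, hd⟩
    exact ⟨⟨h1, hj⟩, ⟨hj, hd⟩⟩

lemma not_mem_Des1 {σ : Equiv.Perm (Fin n)} {j : ℕ} (hj : n ≤ j) : j ∉ Des1 σ := by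
  unfold Des1
  rw [Finset.mem_filter, Finset.mem_Ico]
  rintro ⟨⟨_, h2⟩, _⟩
  omega

section Sigma

variable (i : ℕ) (A : Finset (Fin n))

lemma cardC (hA : A.card = i) : Aᶜ.card = n - i := by
  rw [Finset.card_compl, hA, Fintype.card_fin]

/-- the `k`-th smallest element of `A` -/
def embA (hA : A.card = i) (k : Fin i) : Fin n := A.orderEmbOfFin hA k

/-- the `k`-th smallest element of `Aᶜ` -/
def embC (hA : A.card = i) (k : Fin (n - i)) : Fin n := Aᶜ.orderEmbOfFin (cardC i A hA) k

lemma embA_mem (hA : A.card = i) (k : Fin i) : embA i A hA k ∈ A := Finset.orderEmbOfFin_mem _ _ _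

lemma embC_not_mem (hA : A.card = i) (k : Fin (n - i)) : embC i A hA k ∉ A := by
  have h := Finset.orderEmbOfFin_mem Aᶜ (cardC i A hA) k
  rw [Finset.mem_compl] at h
  exact h

lemma embA_strictMono (hA : A.card = i) : StrictMono (embA i A hA) := (A.orderEmbOfFin hA).strictMono

lemma embC_strictMono (hA : A.card = i) : StrictMono (embC i A hA) := (Aᶜ.orderEmbOfFin _).strictMono

lemma exists_embA (hA : A.card = i) {x : Fin n} (hx : x ∈ A) : ∃ k, embA i A hA k = x := by
  have : x ∈ Set.range (A.orderEmbOfFin hA) := by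
    rw [Finset.range_orderEmbOfFin]; exact hx
  exact this

lemma exists_embC (hA : A.card = i) {x : Fin n} (hx : x ∉ A) : ∃ k, embC i A hA k = x := by
  have : x ∈ Set.range (Aᶜ.orderEmbOfFin (cardC i A hA)) := by
    rw [Finset.range_orderEmbOfFin]; simpa [Finset.mem_compl] using hx
  exact this

def sigmaFun (hA : A.card = i) (x : Fin n) : Fin n :=
  if h : (x : ℕ) < i then embA i A hA ⟨x, h⟩
  else embC i A hA ⟨(x : ℕ) - i, by have := x.isLt; omega⟩

lemma sigmaFun_injective (hA : A.card = i) : Function.Injective (sigmaFun i A hA) := by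
  intro x y hxy
  unfold sigmaFun at hxy
  by_cases hx : (x : ℕ) < i <;> by_cases hy : (y : ℕ) < i
  · rw [dif_pos hx, dif_pos hy] at hxy
    have := (embA_strictMono i A hA).injective hxy
    have := congrArg Fin.val this
    exact Fin.ext this
  · rw [dif_pos hx, dif_neg hy] at hxy
    exact absurd (hxy ▸ embA_mem i A hA _) (embC_not_mem i A hA _)
  · rw [dif_neg hx, dif_pos hy] at hxy
    exact absurd (hxy.symm ▸ embA_mem i A hA _) (embC_not_mem i A hA _)
  · rw [dif_neg hx, dif_neg hy] at hxy
    have := (embC_strictMono i A hA).injective hxy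
    have := congrArg Fin.val this
    simp only at this
    exact Fin.ext (by omega)

/-- The permutation `σ_A`: increasing on `[0,i)` with image `A`, increasing on `[i,n)`
with image `Aᶜ`. -/
def sigmaA (hA : A.card = i) : Equiv.Perm (Fin n) :=
  Equiv.ofBijective _ (Finite.injective_iff_bijective.mp (sigmaFun_injective i A hA))

lemma sigmaA_apply (hA : A.card = i) (x : Fin n) : sigmaA i A hA x = sigmaFun i A hA x := rfl

lemma sigmaA_lt (hA : A.card = i) {x : Fin n} (h : (x : ℕ) < i) :
    sigmaA i A hA x = embA i A hA ⟨x, h⟩ := dif_pos h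

lemma sigmaA_ge (hA : A.card = i) {x : Fin n} (h : ¬ (x : ℕ) < i) :
    sigmaA i A hA x = embC i A hA ⟨(x : ℕ) - i, by have := x.isLt; omega⟩ := dif_neg h

lemma sigmaA_inv_embA (hA : A.card = i) (hin : i ≤ n) (k : Fin i) :
    (sigmaA i A hA)⁻¹ (embA i A hA k) = ⟨k, by have := k.isLt; omega⟩ := by
  apply Equiv.Perm.inv_eq_iff_eq.mpr
  rw [sigmaA_lt i A hA (by simp [k.isLt])]

lemma sigmaA_inv_embC (hA : A.card = i) (k : Fin (n - i)) :
    (sigmaA i A hA)⁻¹ (embC i A hA k) = ⟨i + k, by have := k.isLt; omega⟩ := by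
  apply Equiv.Perm.inv_eq_iff_eq.mpr
  rw [sigmaA_ge i A hA (by simp)]
  congr 1
  apply Fin.ext
  simp


lemma card_val_lt {m : ℕ} (a : ℕ) (ha : a ≤ m) :
    (Finset.univ.filter fun x : Fin m => (x : ℕ) < a).card = a := by
  conv_rhs => rw [← Finset.card_range a]
  refine Finset.card_bij' (fun x _ => (x : ℕ))
    (fun b hb => (⟨b, by simp only [Finset.mem_range] at hb; omega⟩ : Fin m)) ?_ ?_ ?_ ?_
  · intro x hx
    simp only [Finset.mem_filter] at hx
    simp [hx.2]
  · intro b hb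
    simp only [Finset.mem_range] at hb
    simp [hb]
  · intro x _; rfl
  · intro b _; rfl

lemma count_A_lt (i : ℕ) (A : Finset (Fin n)) (hA : A.card = i) (k : Fin i) :
    (A.filter fun x => x < embA i A hA k).card = (k : ℕ) := by
  have himg : (A.filter fun x => x < embA i A hA k)
      = (Finset.univ.filter fun j : Fin i => (j : ℕ) < (k : ℕ)).image (embA i A hA) := by
    ext x
    simp only [Finset.mem_filter, Finset.mem_image, Finset.mem_univ, true_and]
    constructor
    · rintro ⟨hxA, hxlt⟩
      obtain ⟨j, rfl⟩ := exists_embA i A hA hxA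
      exact ⟨j, (embA_strictMono i A hA).lt_iff_lt.mp hxlt, rfl⟩
    · rintro ⟨j, hj, rfl⟩
      exact ⟨embA_mem i A hA j, embA_strictMono i A hA hj⟩
  rw [himg, Finset.card_image_of_injective _ (embA_strictMono i A hA).injective,
    card_val_lt (k : ℕ) (le_of_lt k.isLt)]

lemma count_compl_lt (i : ℕ) (A : Finset (Fin n)) (hA : A.card = i) (k : Fin i) :
    (Aᶜ.filter fun x => x < embA i A hA k).card = (embA i A hA k : ℕ) - (k : ℕ) := by
  have hunion : (A.filter fun x => x < embA i A hA k) ∪ (Aᶜ.filter fun x => x < embA i A hA k)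
      = Finset.univ.filter fun x : Fin n => (x : ℕ) < (embA i A hA k : ℕ) := by
    ext x
    simp only [Finset.mem_union, Finset.mem_filter, Finset.mem_compl, Finset.mem_univ, true_and]
    constructor
    · rintro (⟨_, h⟩ | ⟨_, h⟩) <;> exact h
    · intro h
      by_cases hx : x ∈ A
      · exact Or.inl ⟨hx, h⟩
      · exact Or.inr ⟨hx, h⟩
  have hdisj : Disjoint (A.filter fun x => x < embA i A hA k)
      (Aᶜ.filter fun x => x < embA i A hA k) := by
    apply Finset.disjoint_filter_filter
    exact disjoint_compl_right
  have hcard := Finset.card_union_of_disjoint hdisj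
  rw [hunion, card_val_lt _ (le_of_lt (embA i A hA k).isLt), count_A_lt i A hA k] at hcard
  omega

end Sigma

lemma succ_not_desc {i : ℕ} {σ : Equiv.Perm (Fin n)} (hD : Des1 σ ⊆ {i}) (j : ℕ)
    (hj : j + 1 < n) (hne : j + 1 ≠ i) : σ ⟨j, by omega⟩ < σ ⟨j + 1, hj⟩ := by
  have hnotmem : (j + 1) ∉ Des1 σ := fun hmem => hne (Finset.mem_singleton.mp (hD hmem))
  rw [mem_Des1 hj] at hnotmem
  push_neg at hnotmem
  have hle := hnotmem (by omega)
  have hmk : (⟨j + 1 - 1, by omega⟩ : Fin n) = ⟨j, by omega⟩ := by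
    apply Fin.ext; simp
  rw [hmk] at hle
  rcases lt_or_eq_of_le hle with h | h
  · exact h
  · exfalso
    have := σ.injective h
    rw [Fin.mk.injEq] at this
    omega

lemma mono_block {i : ℕ} {σ : Equiv.Perm (Fin n)} (hD : Des1 σ ⊆ {i}) :
    ∀ (d u : ℕ) (hu : u + d < n), 0 < d → (u + d < i ∨ i ≤ u) →
      σ ⟨u, by omega⟩ < σ ⟨u + d, hu⟩ := by
  intro d
  induction d with
  | zero => intro u _ h0 _; omega
  | succ d ih =>
    intro u hu _ hcase
    have hstep : σ ⟨u + d, by omega⟩ < σ ⟨u + d + 1, by omega⟩ :=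
      succ_not_desc hD (u + d) (by omega) (by omega)
    rcases Nat.eq_zero_or_pos d with rfl | hd
    · exact hstep
    · exact lt_trans (ih u (by omega) hd (by omega)) hstep

section Shuffle

variable (i : ℕ)

def AOf (r : Equiv.Perm (Fin n)) : Finset (Fin n) :=
  Finset.univ.filter fun x => (r x : ℕ) < i

lemma card_AOf (hin : i ≤ n) (r : Equiv.Perm (Fin n)) : (AOf i r).card = i := by
  have himg : (AOf i r).image r = Finset.univ.filter fun y : Fin n => (y : ℕ) < i := by
    ext y
    simp only [AOf, Finset.mem_image, Finset.mem_filter, Finset.mem_univ, true_and]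
    constructor
    · rintro ⟨x, hx, rfl⟩; exact hx
    · intro hy; exact ⟨r⁻¹ y, by simp [hy], by simp⟩
  have hc := Finset.card_image_of_injective (AOf i r) r.injective
  rw [himg, card_val_lt i hin] at hc
  exact hc.symm

lemma sigmaA_AOf (hin : i ≤ n) (r : Equiv.Perm (Fin n)) (hr : Des1 r⁻¹ ⊆ {i}) :
    sigmaA i (AOf i r) (card_AOf i hin r) = r⁻¹ := by
  apply Equiv.ext
  intro x
  by_cases hx : (x : ℕ) < i
  · rw [sigmaA_lt i _ _ hx]
    have hf : (fun v : Fin i => r⁻¹ ⟨(v : ℕ), by have := v.isLt; omega⟩)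
        = ⇑((AOf i r).orderEmbOfFin (card_AOf i hin r)) := by
      apply Finset.orderEmbOfFin_unique
      · intro v
        simp [AOf]
      · intro v w hvw
        have hvw' : (v : ℕ) < (w : ℕ) := hvw
        have := mono_block hr ((w : ℕ) - (v : ℕ)) (v : ℕ)
          (by have := w.isLt; omega) (by omega) (by left; have := w.isLt; omega)
        have hmk : (⟨(v : ℕ) + ((w : ℕ) - (v : ℕ)), by have := w.isLt; omega⟩ : Fin n)
            = ⟨(w : ℕ), by have := w.isLt; omega⟩ := by apply Fin.ext; simp; omega
        rw [hmk] at this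
        exact this
    have : embA i (AOf i r) (card_AOf i hin r) ⟨(x : ℕ), hx⟩
        = (fun v : Fin i => r⁻¹ ⟨(v : ℕ), by have := v.isLt; omega⟩) ⟨(x : ℕ), hx⟩ := by
      rw [hf]; rfl
    rw [this]
  · rw [sigmaA_ge i _ _ hx]
    have hf : (fun v : Fin (n - i) => r⁻¹ ⟨i + (v : ℕ), by have := v.isLt; omega⟩)
        = ⇑((AOf i r)ᶜ.orderEmbOfFin (cardC i (AOf i r) (card_AOf i hin r))) := by
      apply Finset.orderEmbOfFin_unique
      · intro v
        simp [AOf]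
      · intro v w hvw
        have hvw' : (v : ℕ) < (w : ℕ) := hvw
        have := mono_block hr ((w : ℕ) - (v : ℕ)) (i + (v : ℕ))
          (by have := w.isLt; omega) (by omega) (by right; omega)
        have hmk : (⟨i + (v : ℕ) + ((w : ℕ) - (v : ℕ)), by have := w.isLt; omega⟩ : Fin n)
            = ⟨i + (w : ℕ), by have := w.isLt; omega⟩ := by apply Fin.ext; simp; omega
        rw [hmk] at this
        exact this
    have : embC i (AOf i r) (card_AOf i hin r) ⟨(x : ℕ) - i, by have := x.isLt; omega⟩
        = (fun v : Fin (n - i) => r⁻¹ ⟨i + (v : ℕ), by have := v.isLt; omega⟩)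
            ⟨(x : ℕ) - i, by have := x.isLt; omega⟩ := by
      rw [hf]; rfl
    rw [this]
    have harg : (⟨i + ((x : ℕ) - i), by have := x.isLt; omega⟩ : Fin n) = x :=
      Fin.ext (by simp; omega)
    exact congrArg _ harg

lemma des_sigmaA (A : Finset (Fin n)) (hA : A.card = i) : Des1 (sigmaA i A hA) ⊆ {i} := by
  intro j hj
  rw [Finset.mem_singleton]
  by_contra hne
  have hj' : 1 ≤ j ∧ j < n := by
    have := (Finset.mem_filter.mp hj).1
    rw [Finset.mem_Ico] at this
    exact this
  have hdesc := (mem_Des1 hj'.2).mp hj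
  have hd := hdesc.2
  by_cases hcase : j < i
  · have h1 : ((⟨j - 1, by omega⟩ : Fin n) : ℕ) < i := by simp; omega
    have h2 : ((⟨j, hj'.2⟩ : Fin n) : ℕ) < i := hcase
    rw [sigmaA_lt i A hA h2, sigmaA_lt i A hA h1] at hd
    have hlt : (⟨((⟨j - 1, by omega⟩ : Fin n) : ℕ), h1⟩ : Fin i)
        < ⟨((⟨j, hj'.2⟩ : Fin n) : ℕ), h2⟩ := by
      rw [Fin.mk_lt_mk]; simp; omega
    exact absurd hd (asymm (embA_strictMono i A hA hlt))
  · have h1 : ¬ ((⟨j - 1, by omega⟩ : Fin n) : ℕ) < i := by simp; omega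
    have h2 : ¬ ((⟨j, hj'.2⟩ : Fin n) : ℕ) < i := by simp; omega
    rw [sigmaA_ge i A hA h2, sigmaA_ge i A hA h1] at hd
    have hlt : (⟨((⟨j - 1, by omega⟩ : Fin n) : ℕ) - i, by simp; omega⟩ : Fin (n - i))
        < ⟨((⟨j, hj'.2⟩ : Fin n) : ℕ) - i, by simp; omega⟩ := by
      rw [Fin.mk_lt_mk]; simp; omega
    exact absurd hd (asymm (embC_strictMono i A hA hlt))

lemma AOf_sigmaA_inv (A : Finset (Fin n)) (hA : A.card = i) (hin : i ≤ n) :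
    AOf i ((sigmaA i A hA)⁻¹ : Equiv.Perm (Fin n)) = A := by
  ext x
  simp only [AOf, Finset.mem_filter, Finset.mem_univ, true_and]
  constructor
  · intro hx
    have : sigmaA i A hA ((sigmaA i A hA)⁻¹ x) = x := by simp
    rw [← this, sigmaA_lt i A hA hx]
    exact embA_mem i A hA _
  · intro hx
    obtain ⟨k, rfl⟩ := exists_embA i A hA hx
    rw [sigmaA_inv_embA i A hA hin k]
    exact k.isLt

end Shuffle

lemma mono_block' {i : ℕ} {σ : Equiv.Perm (Fin n)} (hD : Des1 σ ⊆ {i}) (u v : Fin n)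
    (huv : u < v) (hcase : (v : ℕ) < i ∨ i ≤ (u : ℕ)) : σ u < σ v := by
  have huv' : (u : ℕ) < (v : ℕ) := huv
  have h := mono_block hD ((v : ℕ) - (u : ℕ)) (u : ℕ) (by have := v.isLt; omega)
    (by omega) (by omega)
  have h1 : (⟨(u : ℕ), by have := u.isLt; omega⟩ : Fin n) = u := Fin.ext rfl
  have h2 : (⟨(u : ℕ) + ((v : ℕ) - (u : ℕ)), by have := v.isLt; omega⟩ : Fin n) = v :=
    Fin.ext (by simp; omega)
  rwa [h1, h2] at h

lemma pi_fix {i : ℕ} {π : Equiv.Perm (Fin n)} (hπ : ∀ j : Fin n, π j ≠ j → (j : ℕ) < i)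
    {x : Fin n} (hx : i ≤ (x : ℕ)) : π x = x := by
  by_contra h
  exact absurd (hπ x h) (by omega)

lemma pi_lt {i : ℕ} {π : Equiv.Perm (Fin n)} (hπ : ∀ j : Fin n, π j ≠ j → (j : ℕ) < i)
    {x : Fin n} (hx : (x : ℕ) < i) : (π x : ℕ) < i := by
  by_contra h
  have h2 : π (π x) = π x := pi_fix hπ (le_of_not_gt h)
  have h3 := π.injective h2
  rw [h3] at h
  exact h hx

section InvS

variable (i : ℕ) (A : Finset (Fin n)) (hA : A.card = i) (hin : i ≤ n)
  (π : Equiv.Perm (Fin n))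

lemma invS_eq (hi1 : 1 ≤ i) (hinn : i ≤ n) (hπ : ∀ j : Fin n, π j ≠ j → (j : ℕ) < i) :
    invS (π * (sigmaA i A hA)⁻¹) = invS π + ∑ k : Fin i, ((embA i A hA k : ℕ) - (k : ℕ)) := by
  set σ := sigmaA i A hA with hσdef
  have hD : Des1 σ ⊆ {i} := des_sigmaA i A hA
  -- step 1 : reindex
  have h12 : invS (π * σ⁻¹) = (Finset.univ.filter fun p : Fin n × Fin n =>
      σ p.1 < σ p.2 ∧ π p.2 < π p.1).card := by
    unfold invS
    apply Finset.card_bij' (fun p _ => ((σ⁻¹ p.1 : Fin n), (σ⁻¹ p.2 : Fin n)))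
      (fun p _ => ((σ p.1 : Fin n), (σ p.2 : Fin n)))
    · intro p hp
      simp only [Finset.mem_filter, Finset.mem_univ, true_and] at hp ⊢
      simpa using hp
    · intro p hp
      simp only [Finset.mem_filter, Finset.mem_univ, true_and] at hp ⊢
      simpa using hp
    · intro p _; simp
    · intro p _; simp
  rw [h12]
  -- step 2 : split
  set S2a := Finset.univ.filter fun p : Fin n × Fin n =>
    ((p.1 : ℕ) < i ∧ (p.2 : ℕ) < i) ∧ σ p.1 < σ p.2 ∧ π p.2 < π p.1 with hS2a
  set S2b := Finset.univ.filter fun p : Fin n × Fin n =>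
    ((p.2 : ℕ) < i ∧ i ≤ (p.1 : ℕ)) ∧ σ p.1 < σ p.2 with hS2b
  have hsplit : (Finset.univ.filter fun p : Fin n × Fin n =>
      σ p.1 < σ p.2 ∧ π p.2 < π p.1) = S2a ∪ S2b := by
    ext p
    simp only [hS2a, hS2b, Finset.mem_union, Finset.mem_filter, Finset.mem_univ, true_and]
    constructor
    · rintro ⟨hσlt, hπlt⟩
      by_cases h1 : (p.1 : ℕ) < i <;> by_cases h2 : (p.2 : ℕ) < i
      · exact Or.inl ⟨⟨h1, h2⟩, hσlt, hπlt⟩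
      · exfalso
        have e2 : π p.2 = p.2 := pi_fix hπ (by omega)
        have e1 : (π p.1 : ℕ) < i := pi_lt hπ h1
        rw [e2] at hπlt
        have : (p.2 : ℕ) < (π p.1 : ℕ) := hπlt
        omega
      · exact Or.inr ⟨⟨h2, by omega⟩, hσlt⟩
      · exfalso
        have e1 : π p.1 = p.1 := pi_fix hπ (by omega)
        have e2 : π p.2 = p.2 := pi_fix hπ (by omega)
        rw [e1, e2] at hπlt
        have : σ p.2 < σ p.1 := mono_block' hD p.2 p.1 hπlt (by omega)
        exact absurd hσlt (asymm this)
    · rintro (⟨_, hc⟩ | ⟨⟨h2, h1⟩, hσlt⟩)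
      · exact hc
      · refine ⟨hσlt, ?_⟩
        have e1 : π p.1 = p.1 := pi_fix hπ h1
        have e2 : (π p.2 : ℕ) < i := pi_lt hπ h2
        rw [e1]
        exact show (π p.2 : ℕ) < (p.1 : ℕ) by omega
  have hdisj : Disjoint S2a S2b := by
    rw [Finset.disjoint_left]
    intro p hp hq
    simp only [hS2a, hS2b, Finset.mem_filter] at hp hq
    omega
  rw [hsplit, Finset.card_union_of_disjoint hdisj]
  -- step 3 : S2a = inversions of π
  have hcardA : S2a.card = invS π := by
    unfold invS
    congr 1
    ext p
    simp only [hS2a, Finset.mem_filter, Finset.mem_univ, true_and]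
    constructor
    · rintro ⟨⟨h1, h2⟩, hσlt, hπlt⟩
      refine ⟨?_, hπlt⟩
      rcases lt_trichotomy p.1 p.2 with h | h | h
      · exact h
      · rw [h] at hσlt; exact absurd hσlt (lt_irrefl _)
      · exact absurd hσlt (asymm (mono_block' hD p.2 p.1 h (Or.inl h1)))
    · rintro ⟨hlt, hπlt⟩
      have h2 : (p.2 : ℕ) < i := by
        by_contra h2
        have e2 : π p.2 = p.2 := pi_fix hπ (by omega)
        rw [e2] at hπlt
        by_cases h1 : (p.1 : ℕ) < i
        · have := pi_lt hπ h1
          have : (p.2 : ℕ) < (π p.1 : ℕ) := hπlt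
          omega
        · have e1 : π p.1 = p.1 := pi_fix hπ (by omega)
          rw [e1] at hπlt
          exact absurd hlt (asymm hπlt)
      have h1 : (p.1 : ℕ) < i := by
        have : (p.1 : ℕ) < (p.2 : ℕ) := hlt
        omega
      exact ⟨⟨h1, h2⟩, mono_block' hD p.1 p.2 hlt (Or.inl h2), hπlt⟩
  -- step 4 : S2b card
  have hcardB : S2b.card = ∑ k : Fin i, ((embA i A hA k : ℕ) - (k : ℕ)) := by
    have hi0 : 0 < i := hi1
    set fidx : Fin n × Fin n → Fin i := fun p => ⟨min (p.2 : ℕ) (i - 1), by omega⟩ with hfidx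
    have hfib := Finset.card_eq_sum_card_fiberwise (f := fidx) (s := S2b) (t := Finset.univ)
      (fun p _ => Finset.mem_univ _)
    rw [hfib]
    apply Finset.sum_congr rfl
    intro k _
    have hkn : (k : ℕ) < n := by have := k.isLt; omega
    have hvk : σ (⟨(k : ℕ), hkn⟩ : Fin n) = embA i A hA k := by
      rw [sigmaA_lt i A hA (show ((⟨(k : ℕ), hkn⟩ : Fin n) : ℕ) < i from k.isLt)]
    rw [← count_compl_lt i A hA k]
    apply Finset.card_bij' (fun p _ => σ p.1)
      (fun y _ => ((σ⁻¹ y : Fin n), (⟨(k : ℕ), hkn⟩ : Fin n)))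
    · intro p hp
      rw [Finset.mem_filter] at hp
      obtain ⟨hp1, hp2⟩ := hp
      rw [hS2b, Finset.mem_filter] at hp1
      obtain ⟨_, ⟨h2, h1⟩, hσlt⟩ := hp1
      have hp2' : (p.2 : ℕ) = (k : ℕ) := by
        have := congrArg Fin.val hp2
        simp only [hfidx] at this
        omega
      have hpeq : p.2 = (⟨(k : ℕ), hkn⟩ : Fin n) := Fin.ext hp2'
      rw [Finset.mem_filter, Finset.mem_compl]
      refine ⟨?_, ?_⟩
      · rw [sigmaA_ge i A hA (by omega)]
        exact embC_not_mem i A hA _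
      · rw [← hvk, ← hpeq]
        exact hσlt
    · intro y hy
      rw [Finset.mem_filter, Finset.mem_compl] at hy
      obtain ⟨hyA, hylt⟩ := hy
      have hinv : i ≤ ((σ⁻¹ y : Fin n) : ℕ) := by
        by_contra hc
        have : σ (σ⁻¹ y) = embA i A hA ⟨((σ⁻¹ y : Fin n) : ℕ), by omega⟩ :=
          sigmaA_lt i A hA (by omega)
        rw [show σ (σ⁻¹ y) = y from σ.apply_symm_apply y] at this
        exact hyA (this ▸ embA_mem i A hA _)
      rw [Finset.mem_filter]
      refine ⟨?_, ?_⟩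
      · rw [hS2b, Finset.mem_filter]
        refine ⟨Finset.mem_univ _, ⟨k.isLt, hinv⟩, ?_⟩
        simp only []
        rw [show σ (σ⁻¹ y) = y from σ.apply_symm_apply y, hvk]
        exact hylt
      · simp only [hfidx]
        apply Fin.ext
        simp only []
        have := k.isLt
        omega
    · intro p hp
      rw [Finset.mem_filter] at hp
      obtain ⟨hp1, hp2⟩ := hp
      rw [hS2b, Finset.mem_filter] at hp1
      have hp2' : (p.2 : ℕ) = (k : ℕ) := by
        have := congrArg Fin.val hp2
        simp only [hfidx] at this
        omega
      have : p = (p.1, p.2) := rfl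
      rw [this]
      simp only [Equiv.Perm.coe_inv, Equiv.symm_apply_apply]
      rw [Prod.mk.injEq]
      exact ⟨rfl, (Fin.ext hp2').symm⟩
    · intro y _
      simp
  rw [hcardA, hcardB]

end InvS



end


lemma Dstat_ofFn (M : ℕ) : ∀ (m : ℕ) (e : Fin m → Bool) (t : Fin m → ℕ) (p : ℕ),
    Dstat M (List.ofFn e) (List.ofFn t) p = ∑ k : Fin m,
      (if e k then M - t k
       else if (if (k : ℕ) = 0 then p else t ⟨(k : ℕ) - 1, by have := k.isLt; omega⟩) < t k
       then M + (m - (k : ℕ)) - t k else 0) := by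
  intro m
  induction m with
  | zero =>
    intro e t p
    simp [Dstat]
  | succ m ih =>
    intro e t p
    rw [List.ofFn_succ (f := e), List.ofFn_succ (f := t), Dstat_cons, Fin.sum_univ_succ,
      ih (fun j => e j.succ) (fun j => t j.succ) (t 0)]
    congr 1
    · -- head terms
      rw [List.length_ofFn]
      rcases Bool.eq_false_or_eq_true (e 0) with h | h <;> simp [h]
    · -- tails
      refine Finset.sum_congr rfl fun k _ => ?_
      have hv : (Fin.succ k : ℕ) = (k : ℕ) + 1 := rfl
      have harith : m + 1 - ((Fin.succ k : ℕ)) = m - (k : ℕ) := by rw [hv]; omega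
      rw [harith]
      have hne : ¬ ((Fin.succ k : ℕ) = 0) := by rw [hv]; omega
      rw [if_neg hne]
      have hprev : (if (k : ℕ) = 0 then t 0
            else t (Fin.succ ⟨(k : ℕ) - 1, by have := k.isLt; omega⟩))
          = t ⟨(Fin.succ k : ℕ) - 1, by have := k.isLt; rw [hv]; omega⟩ := by
        by_cases hk0 : (k : ℕ) = 0
        · rw [if_pos hk0]
          congr 1
          apply Fin.ext
          simp [hk0, hv]
        · rw [if_neg hk0]
          congr 1
          apply Fin.ext
          simp [hv]
          omega
      rw [hprev]

lemma akv_lower (i : ℕ) (A : Finset (Fin n)) (hA : A.card = i) (k : Fin i) :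
    (k : ℕ) ≤ (embA i A hA k : ℕ) := by
  have h1 := count_A_lt i A hA k
  have hsub : A.filter (· < embA i A hA k)
      ⊆ Finset.univ.filter fun x : Fin n => (x : ℕ) < (embA i A hA k : ℕ) := by
    intro x hx
    rw [Finset.mem_filter] at hx ⊢
    exact ⟨Finset.mem_univ _, hx.2⟩
  have h2 := Finset.card_le_card hsub
  rw [h1, card_val_lt _ (le_of_lt (embA i A hA k).isLt)] at h2
  exact h2

lemma akv_upper (i : ℕ) (A : Finset (Fin n)) (hA : A.card = i) (hinn : i ≤ n) (k : Fin i) :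
    (embA i A hA k : ℕ) ≤ n - i + (k : ℕ) := by
  have hsplitA := Finset.card_filter_add_card_filter_not
    (s := A) (p := (· < embA i A hA k))
  have hsplitU := Finset.card_filter_add_card_filter_not
    (s := (Finset.univ : Finset (Fin n))) (p := fun x => (x : ℕ) < (embA i A hA k : ℕ))
  rw [count_A_lt i A hA k, hA] at hsplitA
  rw [card_val_lt _ (le_of_lt (embA i A hA k).isLt), Finset.card_univ, Fintype.card_fin]
    at hsplitU
  have hsub : (A.filter fun x => ¬ x < embA i A hA k)
      ⊆ Finset.univ.filter fun x : Fin n => ¬ (x : ℕ) < (embA i A hA k : ℕ) := by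
    intro x hx
    rw [Finset.mem_filter] at hx ⊢
    exact ⟨Finset.mem_univ _, hx.2⟩
  have h2 := Finset.card_le_card hsub
  have hk := k.isLt
  omega

lemma akv_strict (i : ℕ) (A : Finset (Fin n)) (hA : A.card = i) (k l : Fin i) (h : k < l) :
    (embA i A hA k : ℕ) < (embA i A hA l : ℕ) := embA_strictMono i A hA h

lemma pred_mem (i : ℕ) (A : Finset (Fin n)) (hA : A.card = i) (k : Fin i)
    (h1 : 1 ≤ (embA i A hA k : ℕ))
    (hmem : (⟨(embA i A hA k : ℕ) - 1, by have := (embA i A hA k).isLt; omega⟩ : Fin n) ∈ A) :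
    1 ≤ (k : ℕ) ∧ ∀ hk : (k : ℕ) - 1 < i,
      (embA i A hA ⟨(k : ℕ) - 1, hk⟩ : ℕ) = (embA i A hA k : ℕ) - 1 := by
  obtain ⟨k', hk'⟩ := exists_embA i A hA hmem
  have hvk' : (embA i A hA k' : ℕ) = (embA i A hA k : ℕ) - 1 := by rw [hk']
  have hlt : k' < k := by
    have : (embA i A hA k' : ℕ) < (embA i A hA k : ℕ) := by omega
    exact (embA_strictMono i A hA).lt_iff_lt.mp this
  have hk1 : 1 ≤ (k : ℕ) := by
    have : (k' : ℕ) < (k : ℕ) := hlt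
    omega
  refine ⟨hk1, fun hk => ?_⟩
  have hle : embA i A hA k' ≤ embA i A hA ⟨(k : ℕ) - 1, hk⟩ := by
    apply (embA_strictMono i A hA).monotone
    have h' : (k' : ℕ) < (k : ℕ) := hlt
    exact show (k' : ℕ) ≤ (k : ℕ) - 1 by omega
  have hlt2 : embA i A hA ⟨(k : ℕ) - 1, hk⟩ < embA i A hA k := by
    apply embA_strictMono i A hA
    rw [Fin.lt_def]
    simp
    omega
  have e1 : (embA i A hA k' : ℕ) ≤ (embA i A hA ⟨(k : ℕ) - 1, hk⟩ : ℕ) := hle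
  have e2 : (embA i A hA ⟨(k : ℕ) - 1, hk⟩ : ℕ) < (embA i A hA k : ℕ) := hlt2
  omega

lemma pred_mem_rev (i : ℕ) (A : Finset (Fin n)) (hA : A.card = i) (k : Fin i)
    (h1 : 1 ≤ (embA i A hA k : ℕ)) (hk1 : 1 ≤ (k : ℕ)) (hk : (k : ℕ) - 1 < i)
    (heq : (embA i A hA ⟨(k : ℕ) - 1, hk⟩ : ℕ) = (embA i A hA k : ℕ) - 1) :
    (⟨(embA i A hA k : ℕ) - 1, by have := (embA i A hA k).isLt; omega⟩ : Fin n) ∈ A := by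
  have : (⟨(embA i A hA k : ℕ) - 1, by have := (embA i A hA k).isLt; omega⟩ : Fin n)
      = embA i A hA ⟨(k : ℕ) - 1, hk⟩ := Fin.ext (by simp [heq])
  rw [this]
  exact embA_mem i A hA _

lemma des_pi_bound (i : ℕ) (π : Equiv.Perm (Fin n)) (hinn : i ≤ n)
    (hπ : ∀ j : Fin n, π j ≠ j → (j : ℕ) < i) : ∀ j ∈ Des1 π, 1 ≤ j ∧ j < i := by
  intro j hj
  have hjn : (1 ≤ j ∧ j < n) := by
    have := (Finset.mem_filter.mp hj).1
    rwa [Finset.mem_Ico] at this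
  have hd := ((mem_Des1 hjn.2).mp hj).2
  refine ⟨hjn.1, ?_⟩
  by_contra hc
  have hij : i ≤ j := by omega
  have e2 : π ⟨j, hjn.2⟩ = ⟨j, hjn.2⟩ := pi_fix hπ hij
  rw [e2] at hd
  have hx1n : j - 1 < n := by omega
  by_cases h1 : j - 1 < i
  · have hv2 : (π (⟨j - 1, hx1n⟩ : Fin n) : ℕ) < i :=
      pi_lt hπ (show ((⟨j - 1, hx1n⟩ : Fin n) : ℕ) < i from h1)
    have hval : (j : ℕ) < (π (⟨j - 1, hx1n⟩ : Fin n) : ℕ) := hd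
    omega
  · have e1 : π (⟨j - 1, hx1n⟩ : Fin n) = ⟨j - 1, hx1n⟩ := pi_fix hπ (by simp; omega)
    have hval : (j : ℕ) < (π (⟨j - 1, hx1n⟩ : Fin n) : ℕ) := hd
    rw [e1] at hval
    have : ((⟨j - 1, hx1n⟩ : Fin n) : ℕ) = j - 1 := rfl
    omega

lemma rmaj_pi (i : ℕ) (π : Equiv.Perm (Fin n)) (hinn : i ≤ n)
    (hπ : ∀ j : Fin n, π j ≠ j → (j : ℕ) < i) :
    rmaj1 i π = ∑ k : Fin i, (if (k : ℕ) ∈ Des1 π then i - (k : ℕ) else 0) := by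
  unfold rmaj1
  rw [← Finset.sum_filter]
  refine Finset.sum_bij' (fun j hj => (⟨j, (des_pi_bound i π hinn hπ j hj).2⟩ : Fin i))
    (fun k _ => (k : ℕ)) ?_ ?_ ?_ ?_ ?_
  · intro j hj
    rw [Finset.mem_filter]
    exact ⟨Finset.mem_univ _, hj⟩
  · intro k hk
    exact (Finset.mem_filter.mp hk).2
  · intro j _; rfl
  · intro k _
    apply Fin.ext
    rfl
  · intro j _; rfl

lemma rmaj_eq (i : ℕ) (A : Finset (Fin n)) (hA : A.card = i) (π : Equiv.Perm (Fin n))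
    (hi1 : 1 ≤ i) (hinn : i ≤ n) (hπ : ∀ j : Fin n, π j ≠ j → (j : ℕ) < i) :
    rmaj1 n (π * (sigmaA i A hA)⁻¹)
      = rmaj1 i π + Dstat (n - i) (List.ofFn fun k : Fin i => decide ((k : ℕ) ∈ Des1 π))
          (List.ofFn fun k : Fin i => (embA i A hA k : ℕ) - (k : ℕ)) 0 := by
  set σ := sigmaA i A hA with hσ
  set w := π * σ⁻¹ with hw
  have hwA : ∀ k : Fin i, w (embA i A hA k) = π ⟨(k : ℕ), by have := k.isLt; omega⟩ := by
    intro k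
    rw [hw, Equiv.Perm.mul_apply, hσ, sigmaA_inv_embA i A hA hinn k]
  have hwC : ∀ c : Fin (n - i), w (embC i A hA c)
      = ⟨i + (c : ℕ), by have := c.isLt; omega⟩ := by
    intro c
    rw [hw, Equiv.Perm.mul_apply, hσ, sigmaA_inv_embC i A hA c]
    exact pi_fix hπ (by simp)
  have hdesw : ∀ j : ℕ, j ∈ Des1 w ↔ ∃ k : Fin i,
      (1 ≤ (embA i A hA k : ℕ) ∧
        ((⟨(embA i A hA k : ℕ) - 1, by have := (embA i A hA k).isLt; omega⟩ : Fin n) ∈ A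
          → (k : ℕ) ∈ Des1 π)) ∧ (embA i A hA k : ℕ) = j := by
    intro j
    constructor
    · intro hj
      have hjn : (1 ≤ j ∧ j < n) := by
        have := (Finset.mem_filter.mp hj).1
        rwa [Finset.mem_Ico] at this
      have hjm : j - 1 < n := by omega
      have hd : w (⟨j, hjn.2⟩ : Fin n) < w (⟨j - 1, hjm⟩ : Fin n) :=
        ((mem_Des1 hjn.2).mp hj).2
      by_cases h2 : (⟨j, hjn.2⟩ : Fin n) ∈ A
      · obtain ⟨k, hk⟩ := exists_embA i A hA h2
        have hkv : (embA i A hA k : ℕ) = j := by rw [hk]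
        refine ⟨k, ⟨by omega, ?_⟩, hkv⟩
        intro hmem
        have hpm := pred_mem i A hA k (by omega) hmem
        have hkn : (k : ℕ) < n := by have := k.isLt; omega
        rw [mem_Des1 hkn]
        refine ⟨hpm.1, ?_⟩
        have hki1 : (k : ℕ) - 1 < i := by have := k.isLt; omega
        have hw1 : w (⟨j - 1, hjm⟩ : Fin n) = π ⟨(k : ℕ) - 1, by omega⟩ := by
          have heq : (⟨j - 1, hjm⟩ : Fin n) = embA i A hA ⟨(k : ℕ) - 1, hki1⟩ := by
            apply Fin.ext
            show j - 1 = _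
            rw [hpm.2 hki1]
            omega
          rw [heq]
          exact hwA _
        have hw2 : w (⟨j, hjn.2⟩ : Fin n) = π ⟨(k : ℕ), hkn⟩ := by
          rw [← hk]
          exact hwA k
        have hfin := hd
        rw [hw2, hw1] at hfin
        exact hfin
      · exfalso
        obtain ⟨c, hc⟩ := exists_embC i A hA h2
        have hw2 : w (⟨j, hjn.2⟩ : Fin n) = ⟨i + (c : ℕ), by have := c.isLt; omega⟩ := by
          rw [← hc]; exact hwC c
        by_cases h1 : (⟨j - 1, hjm⟩ : Fin n) ∈ A
        · obtain ⟨k1, hk1⟩ := exists_embA i A hA h1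
          have hk1n : (k1 : ℕ) < n := by have := k1.isLt; omega
          have hw1 : w (⟨j - 1, hjm⟩ : Fin n) = π ⟨(k1 : ℕ), hk1n⟩ := by
            rw [← hk1]; exact hwA k1
          rw [hw2, hw1] at hd
          have hv : i + (c : ℕ) < (π ⟨(k1 : ℕ), hk1n⟩ : ℕ) := hd
          have hv2 : (π (⟨(k1 : ℕ), hk1n⟩ : Fin n) : ℕ) < i :=
            pi_lt hπ (show ((⟨(k1 : ℕ), hk1n⟩ : Fin n) : ℕ) < i from k1.isLt)
          omega
        · obtain ⟨c1, hc1⟩ := exists_embC i A hA h1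
          have hw1 : w (⟨j - 1, hjm⟩ : Fin n) = ⟨i + (c1 : ℕ), by have := c1.isLt; omega⟩ := by
            rw [← hc1]; exact hwC c1
          rw [hw2, hw1] at hd
          have hv : i + (c : ℕ) < i + (c1 : ℕ) := hd
          have hx12 : embC i A hA c1 < embC i A hA c := by
            rw [hc1, hc]
            exact Fin.mk_lt_mk.mpr (by omega)
          have hcc : (c1 : ℕ) < (c : ℕ) := (embC_strictMono i A hA).lt_iff_lt.mp hx12
          omega
    · rintro ⟨k, ⟨h1le, himp⟩, hkj⟩
      have hjn : j < n := by rw [← hkj]; exact (embA i A hA k).isLt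
      have hj1 : 1 ≤ j := by omega
      have hjm : j - 1 < n := by omega
      rw [mem_Des1 hjn]
      refine ⟨hj1, ?_⟩
      have hkn : (k : ℕ) < n := by have := k.isLt; omega
      have hx2 : (⟨j, hjn⟩ : Fin n) = embA i A hA k := Fin.ext hkj.symm
      by_cases hmem : (⟨(embA i A hA k : ℕ) - 1,
          by have := (embA i A hA k).isLt; omega⟩ : Fin n) ∈ A
      · have hdes := himp hmem
        have hpm := pred_mem i A hA k h1le hmem
        have hki1 : (k : ℕ) - 1 < i := by have := k.isLt; omega
        have hdd := ((mem_Des1 hkn).mp hdes).2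
        have hx1 : (⟨j - 1, hjm⟩ : Fin n) = embA i A hA ⟨(k : ℕ) - 1, hki1⟩ := by
          apply Fin.ext
          show j - 1 = _
          rw [hpm.2 hki1]
          omega
        have hgoal : w (⟨j, hjn⟩ : Fin n) < w (⟨j - 1, hjm⟩ : Fin n) := by
          rw [hx2, hx1, hwA k, hwA ⟨(k : ℕ) - 1, hki1⟩]
          exact hdd
        exact hgoal
      · have hmem' : (⟨j - 1, hjm⟩ : Fin n) ∉ A := by
          intro hcon
          apply hmem
          have heq2 : (⟨j - 1, hjm⟩ : Fin n) = ⟨(embA i A hA k : ℕ) - 1,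
              by have := (embA i A hA k).isLt; omega⟩ := Fin.ext (by simp; omega)
          rwa [heq2] at hcon
        obtain ⟨c1, hc1⟩ := exists_embC i A hA hmem'
        have hw1 : w (⟨j - 1, hjm⟩ : Fin n) = ⟨i + (c1 : ℕ), by have := c1.isLt; omega⟩ := by
          rw [← hc1]; exact hwC c1
        have hgoal : w (⟨j, hjn⟩ : Fin n) < w (⟨j - 1, hjm⟩ : Fin n) := by
          rw [hx2, hwA k, hw1]
          have hv2 : (π (⟨(k : ℕ), by have := k.isLt; omega⟩ : Fin n) : ℕ) < i :=
            pi_lt hπ (show ((⟨(k : ℕ), by have := k.isLt; omega⟩ : Fin n) : ℕ) < i from k.isLt)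
          exact show (π (⟨(k : ℕ), by have := k.isLt; omega⟩ : Fin n) : ℕ) < i + (c1 : ℕ)
            by omega
        exact hgoal
  -- image form and summation
  have himage : Des1 w = (Finset.univ.filter fun k : Fin i =>
      1 ≤ (embA i A hA k : ℕ) ∧
        ((⟨(embA i A hA k : ℕ) - 1, by have := (embA i A hA k).isLt; omega⟩ : Fin n) ∈ A
          → (k : ℕ) ∈ Des1 π)).image (fun k => (embA i A hA k : ℕ)) := by
    ext j
    rw [Finset.mem_image, hdesw j]
    constructor
    · rintro ⟨k, hc, he⟩
      exact ⟨k, Finset.mem_filter.mpr ⟨Finset.mem_univ _, hc⟩, he⟩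
    · rintro ⟨k, hk, he⟩
      exact ⟨k, (Finset.mem_filter.mp hk).2, he⟩
  have hrm : rmaj1 n w = ∑ k : Fin i, (if (1 ≤ (embA i A hA k : ℕ) ∧
      ((⟨(embA i A hA k : ℕ) - 1, by have := (embA i A hA k).isLt; omega⟩ : Fin n) ∈ A
        → (k : ℕ) ∈ Des1 π)) then n - (embA i A hA k : ℕ) else 0) := by
    unfold rmaj1
    rw [himage, Finset.sum_image (by
      intro x _ y _ hxy
      exact (embA_strictMono i A hA).injective (Fin.ext hxy)), Finset.sum_filter]
  rw [hrm, rmaj_pi i π hinn hπ, Dstat_ofFn, ← Finset.sum_add_distrib]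
  apply Finset.sum_congr rfl
  intro k _
  simp only [decide_eq_true_eq]
  have hlow := akv_lower i A hA k
  have hup := akv_upper i A hA hinn k
  have hki := k.isLt
  by_cases hdes : (k : ℕ) ∈ Des1 π
  · have hkb := des_pi_bound i π hinn hπ _ hdes
    rw [if_pos (⟨by omega, fun _ => hdes⟩ : _ ∧ _), if_pos hdes, if_pos hdes]
    omega
  · rw [if_neg hdes, if_neg hdes, Nat.zero_add]
    by_cases hk0 : (k : ℕ) = 0
    · rw [if_pos hk0]
      by_cases hpos : (0 : ℕ) < (embA i A hA k : ℕ) - (k : ℕ)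
      · rw [if_pos hpos, if_pos]
        · omega
        · refine ⟨by omega, fun hmem => ?_⟩
          exfalso
          have hpm := pred_mem i A hA k (by omega) hmem
          omega
      · rw [if_neg hpos, if_neg]
        intro hcon
        exact absurd hcon.1 (by omega)
    · rw [if_neg hk0]
      have hki1 : (k : ℕ) - 1 < i := by omega
      have hgen : ∀ (hp : (k : ℕ) - 1 < i), (embA i A hA ⟨(k : ℕ) - 1, hp⟩ : ℕ)
          = (embA i A hA ⟨(k : ℕ) - 1, hki1⟩ : ℕ) := fun hp => rfl
      simp only [hgen]
      have he0 : ((⟨(k : ℕ) - 1, hki1⟩ : Fin i) : ℕ) = (k : ℕ) - 1 := rfl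
      have hlow1 := akv_lower i A hA ⟨(k : ℕ) - 1, hki1⟩
      have hstrict : (embA i A hA ⟨(k : ℕ) - 1, hki1⟩ : ℕ) < (embA i A hA k : ℕ) :=
        akv_strict i A hA _ _ (Fin.mk_lt_mk.mpr (by omega) : (⟨(k : ℕ) - 1, hki1⟩ : Fin i) < ⟨(k : ℕ), hki⟩)
      by_cases hmem : (⟨(embA i A hA k : ℕ) - 1,
          by have := (embA i A hA k).isLt; omega⟩ : Fin n) ∈ A
      · have hpm := pred_mem i A hA k (by omega) hmem
        have hval := hpm.2 hki1
        rw [if_neg (by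
          intro hcon
          exact hdes (hcon.2 hmem)), if_neg (by
          have hv1 : (embA i A hA ⟨(k : ℕ) - 1, hki1⟩ : ℕ) - ((k : ℕ) - 1)
              = (embA i A hA k : ℕ) - (k : ℕ) := by omega
          omega)]
      · rw [if_pos (⟨by omega, fun hcon => absurd hcon hmem⟩ : _ ∧ _), if_pos]
        · omega
        · have hne : (embA i A hA ⟨(k : ℕ) - 1, hki1⟩ : ℕ) ≠ (embA i A hA k : ℕ) - 1 := by
            intro heq
            exact hmem (pred_mem_rev i A hA k (by omega) (by omega) hki1 heq)
          omega

lemma mem_monoLists {M : ℕ} : ∀ (k p : ℕ) (l : List ℕ),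
    l ∈ monoLists M k p ↔ (l.length = k ∧ List.Chain (· ≤ ·) p l ∧ ∀ x ∈ l, x ≤ M) := by
  intro k
  induction k with
  | zero =>
    intro p l
    simp only [monoLists, Finset.mem_singleton]
    constructor
    · rintro rfl
      exact ⟨rfl, List.Chain.nil, by simp⟩
    · rintro ⟨hlen, _, _⟩
      exact List.length_eq_zero_iff.mp hlen
  | succ k ih =>
    intro p l
    simp only [monoLists, Finset.mem_biUnion, Finset.mem_image, Finset.mem_Icc]
    constructor
    · rintro ⟨t, ⟨hpt, htM⟩, l', hl', rfl⟩
      obtain ⟨hlen, hch, hb⟩ := (ih t l').mp hl'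
      refine ⟨by simp [hlen], List.Chain.cons hpt hch, ?_⟩
      intro x hx
      rcases List.mem_cons.mp hx with rfl | hx
      · exact htM
      · exact hb x hx
    · rintro ⟨hlen, hch, hb⟩
      match l, hlen with
      | t :: l', hlen =>
        have hch : p ≤ t ∧ List.Chain (· ≤ ·) t l' := List.isChain_cons_cons.mp hch
        exact ⟨t, ⟨hch.1, hb t (by simp)⟩, l', (ih t l').mpr
          ⟨by simpa using hlen, hch.2, fun x hx => hb x (by simp [hx])⟩, rfl⟩

lemma monoLists_get_mono {M k p : ℕ} {l : List ℕ} (hl : l ∈ monoLists M k p) :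
    ∀ (a b : ℕ) (ha : a < l.length) (hb : b < l.length), a ≤ b →
      l.get ⟨a, ha⟩ ≤ l.get ⟨b, hb⟩ := by
  obtain ⟨hlen, hch, hbnd⟩ := (mem_monoLists k p l).mp hl
  have hpw : l.Pairwise (· ≤ ·) := (List.isChain_iff_pairwise.mp (show List.IsChain (· ≤ ·) (p :: l) from hch)).of_cons
  intro a b ha hb hab
  rcases Nat.eq_or_lt_of_le hab with rfl | hlt
  · exact le_refl _
  · exact List.pairwise_iff_get.mp hpw ⟨a, ha⟩ ⟨b, hb⟩ hlt

theorem chain_iff_get_old {α : Type*} {R : α → α → Prop} {a : α} {l : List α} :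
    List.Chain R a l ↔
    (∀ h : 0 < l.length, R a (l.get ⟨0, h⟩)) ∧
      ∀ (i : ℕ) (h : i < l.length - 1),
        R (l.get ⟨i, by omega⟩) (l.get ⟨i+1, by omega⟩) := by
  unfold List.Chain
  rw [List.isChain_iff_getElem]
  constructor
  · intro H
    exact ⟨fun h => H 0 (by simp; omega), fun i h => H (i+1) (by simp; omega)⟩
  · rintro ⟨H0, H1⟩ i hi
    cases i with
    | zero => exact H0 (by simp at hi; omega)
    | succ i => exact H1 i (by simp at hi; omega)

lemma tlist_mem (i : ℕ) (A : Finset (Fin n)) (hA : A.card = i) (hinn : i ≤ n) :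
    (List.ofFn fun k : Fin i => (embA i A hA k : ℕ) - (k : ℕ)) ∈ monoLists (n - i) i 0 := by
  rw [mem_monoLists]
  refine ⟨by simp, ?_, ?_⟩
  · rw [chain_iff_get_old]
    constructor
    · intro _
      exact Nat.zero_le _
    · intro j hj
      have hj2 : j + 1 < i := by
        have := hj
        rw [List.length_ofFn] at this
        omega
      have hj1 : j < i := by omega
      rw [List.get_ofFn, List.get_ofFn]
      show (embA i A hA _ : ℕ) - _ ≤ (embA i A hA _ : ℕ) - _
      have hstep : (embA i A hA (Fin.cast (by simp) (⟨j, by simp; omega⟩ : Fin (List.ofFn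
          fun k : Fin i => (embA i A hA k : ℕ) - (k : ℕ)).length)) : ℕ)
          < (embA i A hA (Fin.cast (by simp) (⟨j + 1, by simp; omega⟩ : Fin (List.ofFn
          fun k : Fin i => (embA i A hA k : ℕ) - (k : ℕ)).length)) : ℕ) := by
        apply akv_strict
        exact show j < j + 1 by omega
      have hl1 := akv_lower i A hA (Fin.cast (by simp) (⟨j, by simp; omega⟩ : Fin (List.ofFn
          fun k : Fin i => (embA i A hA k : ℕ) - (k : ℕ)).length))
      have hv1 : ((Fin.cast (by simp) (⟨j, by simp; omega⟩ : Fin (List.ofFn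
          fun k : Fin i => (embA i A hA k : ℕ) - (k : ℕ)).length) : Fin i) : ℕ) = j := rfl
      have hv2 : ((Fin.cast (by simp) (⟨j + 1, by simp; omega⟩ : Fin (List.ofFn
          fun k : Fin i => (embA i A hA k : ℕ) - (k : ℕ)).length) : Fin i) : ℕ) = j + 1 := rfl
      omega
  · intro x hx
    rw [List.mem_ofFn] at hx
    obtain ⟨k, rfl⟩ := hx
    have := akv_upper i A hA hinn k
    show (embA i A hA k : ℕ) - (k : ℕ) ≤ n - i
    omega

lemma A_eq_image (i : ℕ) (A : Finset (Fin n)) (hA : A.card = i) :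
    A = Finset.univ.image (embA i A hA) := by
  ext x
  simp only [Finset.mem_image, Finset.mem_univ, true_and]
  constructor
  · intro hx
    exact exists_embA i A hA hx
  · rintro ⟨k, rfl⟩
    exact embA_mem i A hA k

lemma sigmaA_congr (i : ℕ) (A B : Finset (Fin n)) (hAB : A = B) (hA : A.card = i)
    (hB : B.card = i) : sigmaA i A hA = sigmaA i B hB := by
  subst hAB
  rfl

lemma tlist_congr (i : ℕ) (A B : Finset (Fin n)) (hAB : A = B) (hA : A.card = i)
    (hB : B.card = i) :
    (List.ofFn fun k : Fin i => (embA i A hA k : ℕ) - (k : ℕ))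
      = (List.ofFn fun k : Fin i => (embA i B hB k : ℕ) - (k : ℕ)) := by
  subst hAB
  rfl

/-- the subset encoded by a monotone list -/
def BOf (i : ℕ) (hinn : i ≤ n) (l : List ℕ) (hl : l ∈ monoLists (n - i) i 0) :
    Finset (Fin n) :=
  Finset.univ.image fun k : Fin i => (⟨l.getD (k : ℕ) 0 + (k : ℕ), by
    have hm := (mem_monoLists i 0 l).mp hl
    have hlk : (k : ℕ) < l.length := by rw [hm.1]; exact k.isLt
    have hget : l.getD (k : ℕ) 0 = l.get ⟨(k : ℕ), hlk⟩ := by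
      rw [List.getD_eq_getElem l 0 hlk]
      rfl
    have hmem := List.get_mem l ⟨(k : ℕ), hlk⟩
    have hbd := hm.2.2 _ hmem
    have := k.isLt
    omega⟩ : Fin n)

lemma BOf_fun_strictMono (i : ℕ) (hinn : i ≤ n) (l : List ℕ)
    (hl : l ∈ monoLists (n - i) i 0) :
    StrictMono (fun k : Fin i => (⟨l.getD (k : ℕ) 0 + (k : ℕ), by
      have hm := (mem_monoLists i 0 l).mp hl
      have hlk : (k : ℕ) < l.length := by rw [hm.1]; exact k.isLt
      have hget : l.getD (k : ℕ) 0 = l.get ⟨(k : ℕ), hlk⟩ := by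
        rw [List.getD_eq_getElem l 0 hlk]
        rfl
      have hmem := List.get_mem l ⟨(k : ℕ), hlk⟩
      have hbd := hm.2.2 _ hmem
      have := k.isLt
      omega⟩ : Fin n)) := by
  intro a b hab
  have hm := (mem_monoLists i 0 l).mp hl
  have hla : (a : ℕ) < l.length := by rw [hm.1]; exact a.isLt
  have hlb : (b : ℕ) < l.length := by rw [hm.1]; exact b.isLt
  have hab' : (a : ℕ) < (b : ℕ) := hab
  have hmono := monoLists_get_mono hl (a : ℕ) (b : ℕ) hla hlb (by omega)
  have hga : l.getD (a : ℕ) 0 = l.get ⟨(a : ℕ), hla⟩ := by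
    rw [List.getD_eq_getElem l 0 hla]; rfl
  have hgb : l.getD (b : ℕ) 0 = l.get ⟨(b : ℕ), hlb⟩ := by
    rw [List.getD_eq_getElem l 0 hlb]; rfl
  exact Fin.mk_lt_mk.mpr (by omega)

lemma BOf_card (i : ℕ) (hinn : i ≤ n) (l : List ℕ) (hl : l ∈ monoLists (n - i) i 0) :
    (BOf i hinn l hl).card = i := by
  unfold BOf
  rw [Finset.card_image_of_injective _ (BOf_fun_strictMono i hinn l hl).injective,
    Finset.card_univ, Fintype.card_fin]

lemma BOf_emb (i : ℕ) (hinn : i ≤ n) (l : List ℕ) (hl : l ∈ monoLists (n - i) i 0)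
    (k : Fin i) :
    (embA i (BOf i hinn l hl) (BOf_card i hinn l hl) k : ℕ) = l.getD (k : ℕ) 0 + (k : ℕ) := by
  have huniq := Finset.orderEmbOfFin_unique (BOf_card i hinn l hl)
    (f := fun k : Fin i => (⟨l.getD (k : ℕ) 0 + (k : ℕ), by
      have hm := (mem_monoLists i 0 l).mp hl
      have hlk : (k : ℕ) < l.length := by rw [hm.1]; exact k.isLt
      have hget : l.getD (k : ℕ) 0 = l.get ⟨(k : ℕ), hlk⟩ := by
        rw [List.getD_eq_getElem l 0 hlk]
        rfl
      have hmem := List.get_mem l ⟨(k : ℕ), hlk⟩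
      have hbd := hm.2.2 _ hmem
      have := k.isLt
      omega⟩ : Fin n))
    (by
      intro x
      unfold BOf
      exact Finset.mem_image_of_mem _ (Finset.mem_univ x))
    (BOf_fun_strictMono i hinn l hl)
  have := congrFun huniq k
  unfold embA
  rw [← this]

lemma BOf_tlist (i : ℕ) (hinn : i ≤ n) (l : List ℕ) (hl : l ∈ monoLists (n - i) i 0) :
    (List.ofFn fun k : Fin i =>
      (embA i (BOf i hinn l hl) (BOf_card i hinn l hl) k : ℕ) - (k : ℕ)) = l := by
  have hm := (mem_monoLists i 0 l).mp hl
  apply List.ext_getElem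
  · simp [hm.1]
  · intro a h1 h2
    rw [List.getElem_ofFn]
    have hberr := BOf_emb i hinn l hl ⟨a, by simpa using h1⟩
    rw [hberr]
    have hget : l.getD a 0 = l[a] := List.getD_eq_getElem l 0 h2
    simp only []
    omega

lemma tlist_BOf (i : ℕ) (hinn : i ≤ n) (A : Finset (Fin n)) (hA : A.card = i) :
    BOf i hinn (List.ofFn fun k : Fin i => (embA i A hA k : ℕ) - (k : ℕ))
      (tlist_mem i A hA hinn) = A := by
  unfold BOf
  refine Eq.trans ?_ (A_eq_image i A hA).symm
  apply Finset.image_congr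
  intro k _
  apply Fin.ext
  show (List.ofFn fun k : Fin i => (embA i A hA k : ℕ) - (k : ℕ)).getD (k : ℕ) 0 + (k : ℕ)
    = (embA i A hA k : ℕ)
  have hlk : (k : ℕ) < (List.ofFn fun k : Fin i => (embA i A hA k : ℕ) - (k : ℕ)).length := by
    simp
  rw [List.getD_eq_getElem _ 0 hlk, List.getElem_ofFn]
  have hcast : ∀ (z : Fin i), (z : ℕ) = (k : ℕ) →
      (embA i A hA z : ℕ) - (z : ℕ) + (k : ℕ) = (embA i A hA k : ℕ) := by
    intro z hz
    have hzz : z = k := Fin.ext hz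
    subst hzz
    have := akv_lower i A hA z
    omega
  apply hcast
  rfl

end Stmt16Aux

/-- For `1 ≤ i ≤ n-1` and `π ∈ S_n` with `supp(π) ⊆ [i]`, summing over `{i}`-shuffles `r`
(i.e. `Des_S(r⁻¹) ⊆ {i}`):
`∑_r q^{rmaj_{S_n}(πr) - rmaj_{S_i}(π)} = ∑_r q^{ℓ_S(πr) - ℓ_S(π)} = [n choose i]_q`. -/
theorem stmt16 (n i : ℕ) (h1 : 1 ≤ i) (h2 : i ≤ n - 1) (π : Equiv.Perm (Fin n))
    (hsupp : ∀ j : Fin n, π j ≠ j → (j : ℕ) < i) (R : Type*) [CommRing R] (q : R) :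
    (∑ r ∈ Finset.univ.filter (fun r : Equiv.Perm (Fin n) => Des1 r⁻¹ ⊆ {i}),
        q ^ (rmaj1 n (π * r) - rmaj1 i π)) = qbinom q n i ∧
    (∑ r ∈ Finset.univ.filter (fun r : Equiv.Perm (Fin n) => Des1 r⁻¹ ⊆ {i}),
        q ^ (invS (π * r) - invS π)) = qbinom q n i := by
  have hn : 2 ≤ n := by omega
  have hile : i ≤ n := by omega
  constructor
  · -- rmaj branch
    have step1 : (∑ r ∈ Finset.univ.filter (fun r : Equiv.Perm (Fin n) => Des1 r⁻¹ ⊆ {i}),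
          q ^ (rmaj1 n (π * r) - rmaj1 i π))
        = ∑ l ∈ Stmt16Aux.monoLists (n - i) i 0,
            q ^ Stmt16Aux.Dstat (n - i)
              (List.ofFn fun k : Fin i => decide ((k : ℕ) ∈ Des1 π)) l 0 := by
      refine Finset.sum_bij' (fun r _ => List.ofFn fun k : Fin i =>
          (Stmt16Aux.embA i (Stmt16Aux.AOf i r) (Stmt16Aux.card_AOf i hile r) k : ℕ) - (k : ℕ))
        (fun l hl => (Stmt16Aux.sigmaA i (Stmt16Aux.BOf i hile l hl)
          (Stmt16Aux.BOf_card i hile l hl))⁻¹) ?_ ?_ ?_ ?_ ?_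
      · intro r _
        exact Stmt16Aux.tlist_mem i (Stmt16Aux.AOf i r) (Stmt16Aux.card_AOf i hile r) hile
      · intro l hl
        rw [Finset.mem_filter]
        refine ⟨Finset.mem_univ _, ?_⟩
        rw [inv_inv]
        exact Stmt16Aux.des_sigmaA i (Stmt16Aux.BOf i hile l hl)
          (Stmt16Aux.BOf_card i hile l hl)
      · intro r hr
        beta_reduce
        have hr' : Des1 r⁻¹ ⊆ {i} := (Finset.mem_filter.mp hr).2
        have hBA := Stmt16Aux.tlist_BOf i hile (Stmt16Aux.AOf i r)
          (Stmt16Aux.card_AOf i hile r)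
        rw [Stmt16Aux.sigmaA_congr i _ _ hBA _ (Stmt16Aux.card_AOf i hile r),
          Stmt16Aux.sigmaA_AOf i hile r hr', inv_inv]
      · intro l hl
        beta_reduce
        have hAB := Stmt16Aux.AOf_sigmaA_inv i (Stmt16Aux.BOf i hile l hl)
          (Stmt16Aux.BOf_card i hile l hl) hile
        rw [Stmt16Aux.tlist_congr i _ _ hAB _ (Stmt16Aux.BOf_card i hile l hl)]
        exact Stmt16Aux.BOf_tlist i hile l hl
      · intro r hr
        beta_reduce
        have hr' : Des1 r⁻¹ ⊆ {i} := (Finset.mem_filter.mp hr).2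
        have hσ := Stmt16Aux.sigmaA_AOf i hile r hr'
        have hreq := Stmt16Aux.rmaj_eq i (Stmt16Aux.AOf i r) (Stmt16Aux.card_AOf i hile r)
          π h1 hile hsupp
        rw [hσ, inv_inv] at hreq
        rw [hreq]
        congr 1
        omega
    rw [step1]
    have hsd := Stmt16Aux.sum_D q ((n - i) + (List.ofFn
        fun k : Fin i => decide ((k : ℕ) ∈ Des1 π)).length)
      (List.ofFn fun k : Fin i => decide ((k : ℕ) ∈ Des1 π)) (n - i) 0 (Nat.zero_le _)
      (by omega)
    rw [List.length_ofFn] at hsd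
    rw [show n - i - 0 + i = n from by omega] at hsd
    exact hsd
  · -- invS branch
    have step1 : (∑ r ∈ Finset.univ.filter (fun r : Equiv.Perm (Fin n) => Des1 r⁻¹ ⊆ {i}),
          q ^ (invS (π * r) - invS π))
        = ∑ l ∈ Stmt16Aux.monoLists (n - i) i 0, q ^ l.sum := by
      refine Finset.sum_bij' (fun r _ => List.ofFn fun k : Fin i =>
          (Stmt16Aux.embA i (Stmt16Aux.AOf i r) (Stmt16Aux.card_AOf i hile r) k : ℕ) - (k : ℕ))
        (fun l hl => (Stmt16Aux.sigmaA i (Stmt16Aux.BOf i hile l hl)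
          (Stmt16Aux.BOf_card i hile l hl))⁻¹) ?_ ?_ ?_ ?_ ?_
      · intro r _
        exact Stmt16Aux.tlist_mem i (Stmt16Aux.AOf i r) (Stmt16Aux.card_AOf i hile r) hile
      · intro l hl
        rw [Finset.mem_filter]
        refine ⟨Finset.mem_univ _, ?_⟩
        rw [inv_inv]
        exact Stmt16Aux.des_sigmaA i (Stmt16Aux.BOf i hile l hl)
          (Stmt16Aux.BOf_card i hile l hl)
      · intro r hr
        beta_reduce
        have hr' : Des1 r⁻¹ ⊆ {i} := (Finset.mem_filter.mp hr).2
        have hBA := Stmt16Aux.tlist_BOf i hile (Stmt16Aux.AOf i r)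
          (Stmt16Aux.card_AOf i hile r)
        rw [Stmt16Aux.sigmaA_congr i _ _ hBA _ (Stmt16Aux.card_AOf i hile r),
          Stmt16Aux.sigmaA_AOf i hile r hr', inv_inv]
      · intro l hl
        beta_reduce
        have hAB := Stmt16Aux.AOf_sigmaA_inv i (Stmt16Aux.BOf i hile l hl)
          (Stmt16Aux.BOf_card i hile l hl) hile
        rw [Stmt16Aux.tlist_congr i _ _ hAB _ (Stmt16Aux.BOf_card i hile l hl)]
        exact Stmt16Aux.BOf_tlist i hile l hl
      · intro r hr
        beta_reduce
        have hr' : Des1 r⁻¹ ⊆ {i} := (Finset.mem_filter.mp hr).2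
        have hσ := Stmt16Aux.sigmaA_AOf i hile r hr'
        have hreq := Stmt16Aux.invS_eq i (Stmt16Aux.AOf i r) (Stmt16Aux.card_AOf i hile r)
          π h1 hile hsupp
        rw [hσ, inv_inv] at hreq
        rw [hreq, List.sum_ofFn]
        congr 1
        omega
    rw [step1]
    have hst := Stmt16Aux.sum_T q ((n - i) + i) i (n - i) 0 (Nat.zero_le _) (by omega)
    rw [show n - i - 0 + i = n from by omega, Nat.mul_zero, pow_zero, one_mul] at hst
    exact hst
end

section
/- Let 1 ≤ i ≤ n-1 and π ∈ S_n with supp(π) ⊆ [i]. Then Σ over {i}-shuffles r with π r(1) = i+1 of q^{ℓ_S(π r) - ℓ_S(π)} equals q^i [n-1 choose i]_q, and Σ over {i}-shuffles r with π r(1) = π(1) of q^{ℓ_S(π r) - ℓ_S(π)} equals [n-1 choose i-1]_q. -/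
open scoped Classical
open Finset

section Aux17

lemma perm_inv_apply_self {α : Type*} (f : Equiv.Perm α) (x : α) : f⁻¹ (f x) = x :=
  f.symm_apply_apply x

lemma perm_apply_inv_self {α : Type*} (f : Equiv.Perm α) (x : α) : f (f⁻¹ x) = x :=
  f.apply_symm_apply x
variable {R : Type*} [CommRing R] (q : R)

lemma qbinom_zero_right (m : ℕ) : qbinom q m 0 = 1 := by cases m <;> rfl

lemma qbinom_succ_succ (m k : ℕ) :
    qbinom q (m + 1) (k + 1) = qbinom q m k + q ^ (k + 1) * qbinom q m (k + 1) := rfl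

lemma qbinom_eq_zero {q : R} : ∀ {m k : ℕ}, m < k → qbinom q m k = 0
  | 0, k + 1, _ => rfl
  | m + 1, k + 1, h => by
      rw [qbinom_succ_succ, qbinom_eq_zero (show m < k by omega),
        qbinom_eq_zero (show m < k + 1 by omega)]
      ring

lemma qbinom_self : ∀ m : ℕ, qbinom q m m = 1
  | 0 => rfl
  | m + 1 => by
      rw [qbinom_succ_succ, qbinom_self m, qbinom_eq_zero (show m < m + 1 by omega)]
      ring

lemma qbinom_one_right : ∀ m : ℕ, qbinom q m 1 = ∑ j ∈ Finset.range m, q ^ j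
  | 0 => by simp [qbinom]
  | m + 1 => by
      rw [show (1:ℕ) = 0 + 1 from rfl, qbinom_succ_succ, qbinom_zero_right,
        qbinom_one_right m, geom_sum_succ]
      ring

lemma qbinom_pascal' : ∀ m k : ℕ, qbinom q (m + 1) (k + 1)
    = q ^ (m - k) * qbinom q m k + qbinom q m (k + 1)
  | 0, 0 => by simp [qbinom]
  | 0, k + 1 => by
      simp [qbinom_succ_succ, qbinom_eq_zero (show 0 < k + 1 by omega),
        qbinom_eq_zero (show 0 < k + 2 by omega)]
  | m + 1, 0 => by
      rw [qbinom_one_right, qbinom_one_right, qbinom_zero_right, Nat.sub_zero, geom_sum_succ']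
      ring
  | m + 1, k + 1 => by
      rcases lt_or_ge m (k + 1) with hk | hk
      · rcases eq_or_lt_of_le (show m ≤ k by omega) with he | hl
        · subst he
          rw [show m + 1 - (m + 1) = 0 by omega, qbinom_self, qbinom_self,
            qbinom_eq_zero (show m + 1 < m + 1 + 1 by omega)]
          ring
        · rw [qbinom_eq_zero (show m + 2 < k + 2 by omega),
            qbinom_eq_zero (show m + 1 < k + 1 by omega),
            qbinom_eq_zero (show m + 1 < k + 2 by omega)]
          ring
      · obtain ⟨d, rfl⟩ : ∃ d, m = k + 1 + d := ⟨m - (k + 1), by omega⟩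
        have P1 := qbinom_succ_succ q (k + 1 + d) k
        have P2 := qbinom_succ_succ q (k + 1 + d) (k + 1)
        have I1 := qbinom_pascal' (k + 1 + d) k
        have I2 := qbinom_pascal' (k + 1 + d) (k + 1)
        rw [show k + 1 + d - k = d + 1 by omega] at I1
        rw [show k + 1 + d - (k + 1) = d by omega] at I2
        rw [show k + 1 + d + 1 - (k + 1) = d + 1 by omega]
        rw [qbinom_succ_succ, P1, P2]
        linear_combination (I1 - P1) + q ^ (k + 2) * (I2 - P2)

/-- cross statistic of a finite set of naturals -/
def crossN (S : Finset ℕ) : ℕ := ∑ b ∈ S, ((Finset.range b) \ S).card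

variable {R : Type*} [CommRing R] (q : R)

lemma crossN_insert_top {m : ℕ} {S : Finset ℕ} (hS : S ⊆ Finset.range m) :
    crossN (insert m S) = (m - S.card) + crossN S := by
  have hm : m ∉ S := fun h => by simpa using hS h
  rw [crossN, Finset.sum_insert hm]
  have h1 : Finset.range m \ insert m S = Finset.range m \ S := by
    ext x; simp only [Finset.mem_sdiff, Finset.mem_range, Finset.mem_insert]
    constructor
    · rintro ⟨h, h2⟩; exact ⟨h, fun hx => h2 (Or.inr hx)⟩
    · rintro ⟨h, h2⟩; exact ⟨h, by rintro (rfl | hx) <;> [omega; exact h2 hx]⟩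
  have h2 : ∀ b ∈ S, Finset.range b \ insert m S = Finset.range b \ S := by
    intro b hb
    have hbm : b < m := by simpa using hS hb
    ext x; simp only [Finset.mem_sdiff, Finset.mem_range, Finset.mem_insert]
    constructor
    · rintro ⟨h, h2⟩; exact ⟨h, fun hx => h2 (Or.inr hx)⟩
    · rintro ⟨h, h2⟩; exact ⟨h, by rintro (rfl | hx) <;> [omega; exact h2 hx]⟩
  rw [h1, Finset.card_sdiff_of_subset hS, Finset.card_range, crossN]
  congr 1
  exact Finset.sum_congr rfl fun b hb => by rw [h2 b hb]

lemma sum_cross (q : R) : ∀ m k : ℕ,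
    (∑ S ∈ Finset.powersetCard k (Finset.range m), q ^ crossN S) = qbinom q m k
  | m, 0 => by simp [crossN, qbinom_zero_right]
  | 0, k + 1 => by
      rw [show (Finset.range 0) = ∅ from rfl, Finset.powersetCard_eq_empty.2 (by simp),
        qbinom_eq_zero (show 0 < k + 1 by omega), Finset.sum_empty]
  | m + 1, k + 1 => by
      have hdisj : Disjoint (Finset.powersetCard (k + 1) (Finset.range m))
          ((Finset.powersetCard k (Finset.range m)).image (insert m)) := by
        rw [Finset.disjoint_left]
        intro S hS hS'
        rw [Finset.mem_powersetCard] at hS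
        obtain ⟨T, _, rfl⟩ := Finset.mem_image.1 hS'
        exact absurd (hS.1 (Finset.mem_insert_self m T)) (by simp)
      have hinj : ∀ S ∈ Finset.powersetCard k (Finset.range m),
          ∀ T ∈ Finset.powersetCard k (Finset.range m), insert m S = insert m T → S = T := by
        intro S hS T hT h
        rw [Finset.mem_powersetCard] at hS hT
        have hmS : m ∉ S := fun hx => by simpa using hS.1 hx
        have hmT : m ∉ T := fun hx => by simpa using hT.1 hx
        rw [← Finset.erase_insert hmS, ← Finset.erase_insert hmT, h]
      rw [Finset.range_add_one, Finset.powersetCard_succ_insert (by simp),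
        Finset.sum_union hdisj, Finset.sum_image hinj]
      have hstep : ∀ S ∈ Finset.powersetCard k (Finset.range m),
          q ^ crossN (insert m S) = q ^ (m - k) * q ^ crossN S := by
        intro S hS
        rw [Finset.mem_powersetCard] at hS
        rw [crossN_insert_top hS.1, hS.2, pow_add]
      rw [Finset.sum_congr rfl hstep, ← Finset.mul_sum, sum_cross q m (k + 1),
        sum_cross q m k, qbinom_pascal']
      ring

lemma mem_image_pred {S : Finset ℕ} (h0 : 0 ∉ S) {x : ℕ} :
    x ∈ S.image (· - 1) ↔ x + 1 ∈ S := by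
  simp only [Finset.mem_image]
  constructor
  · rintro ⟨s, hs, rfl⟩
    have hs0 : s ≠ 0 := fun h => h0 (h ▸ hs)
    have : s - 1 + 1 = s := by omega
    rwa [this]
  · intro h; exact ⟨x + 1, h, by omega⟩

lemma card_image_pred {S : Finset ℕ} (h0 : 0 ∉ S) : (S.image (· - 1)).card = S.card :=
  Finset.card_image_of_injOn (fun a ha b hb hab => by
    have ha0 : a ≠ 0 := fun h => h0 (h ▸ ha)
    have hb0 : b ≠ 0 := fun h => h0 (h ▸ hb)
    omega)

lemma sdiff_shift {W : Finset ℕ} (h0 : 0 ∉ W) (b : ℕ) :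
    Finset.range (b - 1) \ W.image (· - 1) = ((Finset.range b \ W).erase 0).image (· - 1) := by
  ext x
  simp only [Finset.mem_sdiff, Finset.mem_range, mem_image_pred h0, Finset.mem_image,
    Finset.mem_erase, Finset.mem_sdiff, Finset.mem_range]
  constructor
  · rintro ⟨hx, hx2⟩
    exact ⟨x + 1, ⟨by omega, by omega, hx2⟩, by omega⟩
  · rintro ⟨y, ⟨hy0, hyb, hyW⟩, rfl⟩
    refine ⟨by omega, ?_⟩
    have : y - 1 + 1 = y := by omega
    rwa [this]

lemma crossN_shift {S : Finset ℕ} (h0 : 0 ∉ S) :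
    crossN S = crossN (S.image (· - 1)) + S.card := by
  have hinj : ∀ a ∈ S, ∀ b ∈ S, a - 1 = b - 1 → a = b := by
    intro a ha b hb hab
    have : a ≠ 0 := fun h => h0 (h ▸ ha)
    have : b ≠ 0 := fun h => h0 (h ▸ hb)
    omega
  have key : ∀ b ∈ S, (Finset.range b \ S).card
      = (Finset.range (b - 1) \ S.image (· - 1)).card + 1 := by
    intro b hb
    have hb0 : b ≠ 0 := fun h => h0 (h ▸ hb)
    have h0m : 0 ∈ Finset.range b \ S := by
      simp only [Finset.mem_sdiff, Finset.mem_range]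
      exact ⟨by omega, h0⟩
    have hpos := Finset.card_pos.2 ⟨0, h0m⟩
    rw [sdiff_shift h0, card_image_pred (Finset.notMem_erase _ _),
      Finset.card_erase_of_mem h0m]
    omega
  calc crossN S = ∑ b ∈ S, ((Finset.range (b - 1) \ S.image (· - 1)).card + 1) :=
        Finset.sum_congr rfl key
    _ = (∑ b ∈ S, (Finset.range (b - 1) \ S.image (· - 1)).card) + S.card := by
        rw [Finset.sum_add_distrib, Finset.sum_const, smul_eq_mul, mul_one]
    _ = crossN (S.image (· - 1)) + S.card := by rw [crossN, Finset.sum_image hinj]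

lemma crossN_shift0 {S : Finset ℕ} (h0 : 0 ∈ S) :
    crossN S = crossN ((S.erase 0).image (· - 1)) := by
  have h0W : 0 ∉ S.erase 0 := Finset.notMem_erase _ _
  have hinj : ∀ a ∈ S.erase 0, ∀ b ∈ S.erase 0, a - 1 = b - 1 → a = b := by
    intro a ha b hb hab
    have : a ≠ 0 := (Finset.mem_erase.1 ha).1
    have : b ≠ 0 := (Finset.mem_erase.1 hb).1
    omega
  have key : ∀ b ∈ S.erase 0, (Finset.range b \ S).card
      = (Finset.range (b - 1) \ (S.erase 0).image (· - 1)).card := by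
    intro b hb
    rw [sdiff_shift h0W, card_image_pred (Finset.notMem_erase _ _)]
    congr 1
    ext x
    simp only [Finset.mem_erase, Finset.mem_sdiff, Finset.mem_range]
    by_cases hx : x = 0
    · subst hx; simp [h0]
    · tauto
  rw [crossN, ← Finset.insert_erase h0, Finset.sum_insert (Finset.notMem_erase _ _)]
  rw [Finset.insert_erase h0]
  rw [show Finset.range 0 \ S = ∅ from by simp, Finset.card_empty, zero_add]
  rw [Finset.sum_congr rfl key, crossN, Finset.sum_image hinj]
-- Fin side (appended after ℕ lemmas)


lemma card_pairs {n : ℕ} (P : Fin n × Fin n → Prop) :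
    (Finset.univ.filter P).card
      = ∑ b : Fin n, (Finset.univ.filter fun a : Fin n => P (a, b)).card := by
  rw [Finset.card_eq_sum_card_fiberwise (f := Prod.snd) (t := Finset.univ)
    (fun x _ => Finset.mem_univ _)]
  refine Finset.sum_congr rfl fun b _ => ?_
  have h : (Finset.univ.filter P).filter (fun p => Prod.snd p = b)
      = (Finset.univ.filter fun a : Fin n => P (a, b)).image (fun a => (a, b)) := by
    ext p
    simp only [Finset.mem_filter, Finset.mem_univ, true_and, Finset.mem_image]
    constructor
    · rintro ⟨hp, rfl⟩
      exact ⟨p.1, hp, rfl⟩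
    · rintro ⟨a, ha, rfl⟩
      exact ⟨ha, rfl⟩
  rw [h, Finset.card_image_of_injective _ (fun a1 a2 hx => congrArg Prod.fst hx)]

lemma shuffle_step {n i : ℕ} {r : Equiv.Perm (Fin n)} (hr : Des1 r⁻¹ ⊆ {i})
    {t : ℕ} (ht1 : 1 ≤ t) (ht2 : t < n) (ht3 : t ≠ i) :
    r⁻¹ ⟨t - 1, by omega⟩ < r⁻¹ ⟨t, ht2⟩ := by
  by_contra hlt
  push_neg at hlt
  have hne : r⁻¹ ⟨t, ht2⟩ ≠ r⁻¹ ⟨t - 1, by omega⟩ := by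
    intro h
    have := r⁻¹.injective h
    rw [Fin.ext_iff] at this
    simp at this
    omega
  have hmem : t ∈ Des1 r⁻¹ := by
    rw [Des1, Finset.mem_filter]
    exact ⟨Finset.mem_Ico.2 ⟨ht1, ht2⟩, ht2, lt_of_le_of_ne hlt hne⟩
  have := hr hmem
  rw [Finset.mem_singleton] at this
  exact ht3 this

lemma mono_chain {n : ℕ} (σ : Equiv.Perm (Fin n)) (lo hi : ℕ) (hhi : hi ≤ n)
    (H : ∀ t, (h1 : lo < t) → (h2 : t < hi) → σ ⟨t - 1, by omega⟩ < σ ⟨t, by omega⟩) :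
    ∀ x y : ℕ, (hx : lo ≤ x) → (hxy : x < y) → (hy : y < hi) → σ ⟨x, by omega⟩ < σ ⟨y, by omega⟩ := by
  intro x y hx hxy hy
  induction y with
  | zero => omega
  | succ y ih =>
    have hstep : x ≤ y → σ ⟨y, by omega⟩ < σ ⟨y + 1, by omega⟩ := by
      intro _
      have h := H (y + 1) (by omega) (by omega)
      simpa using h
    rcases Nat.lt_or_ge x y with h | h
    · exact lt_trans (ih h (by omega)) (hstep (by omega))
    · have hxy' : x = y := by omega
      subst hxy'
      exact hstep le_rfl

lemma inv_low {n i : ℕ} {r : Equiv.Perm (Fin n)} (hr : Des1 r⁻¹ ⊆ {i}) (hin : i ≤ n) :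
    ∀ x y : ℕ, (hxy : x < y) → (hy : y < i) → r⁻¹ ⟨x, by omega⟩ < r⁻¹ ⟨y, by omega⟩ := by
  intro x y hxy hy
  exact mono_chain r⁻¹ 0 i hin
    (fun t ht1 ht2 => shuffle_step hr (by omega) (by omega) (by omega)) x y (by omega) hxy hy

lemma inv_high {n i : ℕ} {r : Equiv.Perm (Fin n)} (hr : Des1 r⁻¹ ⊆ {i}) :
    ∀ x y : ℕ, (hx : i ≤ x) → (hxy : x < y) → (hy : y < n) → r⁻¹ ⟨x, by omega⟩ < r⁻¹ ⟨y, by omega⟩ := by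
  intro x y hx hxy hy
  exact mono_chain r⁻¹ i n le_rfl
    (fun t ht1 ht2 => shuffle_step hr (by omega) (by omega) (by omega)) x y hx hxy hy

lemma rT_mono {n i : ℕ} {r : Equiv.Perm (Fin n)} (hr : Des1 r⁻¹ ⊆ {i}) (hin : i ≤ n)
    {a b : Fin n} (ha : (r a : ℕ) < i) (hb : (r b : ℕ) < i) (hab : a < b) : r a < r b := by
  rcases lt_trichotomy (r a) (r b) with h | h | h
  · exact h
  · exact absurd (r.injective h) (ne_of_lt hab)
  · exfalso
    have h2 := inv_low hr hin (r b : ℕ) (r a : ℕ) h ha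
    simp only [Fin.eta, perm_inv_apply_self] at h2
    exact absurd hab (not_lt.2 h2.le)

lemma rC_mono {n i : ℕ} {r : Equiv.Perm (Fin n)} (hr : Des1 r⁻¹ ⊆ {i})
    {a b : Fin n} (ha : ¬ (r a : ℕ) < i) (hb : ¬ (r b : ℕ) < i) (hab : a < b) : r a < r b := by
  rcases lt_trichotomy (r a) (r b) with h | h | h
  · exact h
  · exact absurd (r.injective h) (ne_of_lt hab)
  · exfalso
    have h2 := inv_high hr (r b : ℕ) (r a : ℕ) (by omega) h (r a).isLt
    simp only [Fin.eta, perm_inv_apply_self] at h2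
    exact absurd hab (not_lt.2 h2.le)

lemma pi_fix {n i : ℕ} {π : Equiv.Perm (Fin n)} (hsupp : ∀ j : Fin n, π j ≠ j → (j : ℕ) < i)
    {x : Fin n} (hx : ¬ (x : ℕ) < i) : π x = x := by
  by_contra h
  exact hx (hsupp x h)

lemma pi_mem {n i : ℕ} {π : Equiv.Perm (Fin n)} (hsupp : ∀ j : Fin n, π j ≠ j → (j : ℕ) < i)
    {x : Fin n} : (π x : ℕ) < i ↔ (x : ℕ) < i := by
  constructor
  · intro h
    by_contra hx
    rw [pi_fix hsupp hx] at h
    exact hx h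
  · intro h
    by_contra hpx
    have h1 : π (π x) = π x := pi_fix hsupp hpx
    have h2 := π.injective h1
    rw [h2] at hpx
    exact hpx h

lemma inv_filter_shuffle {n i : ℕ} {r : Equiv.Perm (Fin n)} (hr : Des1 r⁻¹ ⊆ {i}) (hin : i ≤ n) :
    (Finset.univ.filter fun p : Fin n × Fin n => p.1 < p.2 ∧ r p.2 < r p.1)
      = Finset.univ.filter fun p : Fin n × Fin n =>
          p.1 < p.2 ∧ ¬ ((r p.1 : ℕ) < i) ∧ (r p.2 : ℕ) < i := by
  ext p
  simp only [Finset.mem_filter, Finset.mem_univ, true_and, and_congr_right_iff]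
  intro hp
  constructor
  · intro hinv
    by_cases h1 : (r p.1 : ℕ) < i <;> by_cases h2 : (r p.2 : ℕ) < i
    · exact absurd (rT_mono hr hin h1 h2 hp) (not_lt.2 hinv.le)
    · rw [Fin.lt_def] at hinv
      omega
    · exact ⟨h1, h2⟩
    · exact absurd (rC_mono hr h1 h2 hp) (not_lt.2 hinv.le)
  · rintro ⟨h1, h2⟩
    rw [Fin.lt_def]
    omega

lemma Tset_card {n i : ℕ} {r : Equiv.Perm (Fin n)} (hin : i ≤ n) :
    (Finset.univ.filter fun j : Fin n => (r j : ℕ) < i).card = i := by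
  have h1 : (Finset.univ.filter fun j : Fin n => (r j : ℕ) < i)
      = (Finset.univ.filter fun k : Fin n => (k : ℕ) < i).image (fun k => r⁻¹ k) := by
    ext j
    simp only [Finset.mem_filter, Finset.mem_univ, true_and, Finset.mem_image]
    constructor
    · intro h
      exact ⟨r j, h, by simp⟩
    · rintro ⟨k, hk, rfl⟩
      simpa using hk
  have h2 : (Finset.univ.filter fun k : Fin n => (k : ℕ) < i)
      = (Finset.range i).attachFin (fun m hm => lt_of_lt_of_le (Finset.mem_range.1 hm) hin) := by
    ext k
    simp [Finset.mem_attachFin]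
  rw [h1, Finset.card_image_of_injective _ r⁻¹.injective, h2, Finset.card_attachFin,
    Finset.card_range]

lemma mem_val_image {n : ℕ} {T : Finset (Fin n)} {a : Fin n} :
    (a : ℕ) ∈ T.image Fin.val ↔ a ∈ T := by
  simp only [Finset.mem_image]
  constructor
  · rintro ⟨b, hb, hba⟩
    rwa [show b = a from Fin.ext hba] at hb
  · intro h; exact ⟨a, h, rfl⟩

lemma invS_shuffle {n i : ℕ} {r : Equiv.Perm (Fin n)} (hr : Des1 r⁻¹ ⊆ {i}) (hin : i ≤ n) :
    invS r = crossN ((Finset.univ.filter fun j : Fin n => (r j : ℕ) < i).image Fin.val) := by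
  rw [invS, inv_filter_shuffle hr hin]
  rw [Finset.card_eq_sum_card_fiberwise (f := Prod.snd) (t := Finset.univ)
    (fun x _ => Finset.mem_univ _)]
  rw [crossN, Finset.sum_image (fun a _ b _ h => Fin.val_injective h)]
  rw [← Finset.sum_subset (Finset.subset_univ
    (Finset.univ.filter fun j : Fin n => (r j : ℕ) < i)) ?_]
  · refine Finset.sum_congr rfl fun b hb => ?_
    have hbT : (r b : ℕ) < i := (Finset.mem_filter.1 hb).2
    refine Finset.card_bij' (fun p _ => (p.1 : ℕ))
      (fun x hx => (⟨x, by
        have := (Finset.mem_sdiff.1 hx).1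
        rw [Finset.mem_range] at this
        exact lt_trans this b.isLt⟩, b)) ?_ ?_ ?_ ?_
    · rintro ⟨a, c⟩ hp
      simp only [Finset.mem_filter, Finset.mem_univ, true_and] at hp
      obtain ⟨⟨hac, hra, _⟩, hcb⟩ := hp
      obtain rfl : c = b := hcb
      rw [Finset.mem_sdiff, Finset.mem_range]
      refine ⟨hac, fun hmem => ?_⟩
      obtain ⟨d, hd, hda⟩ := Finset.mem_image.1 hmem
      have : d = a := Fin.ext hda
      subst this
      exact hra (Finset.mem_filter.1 hd).2
    · intro x hx
      rw [Finset.mem_sdiff, Finset.mem_range] at hx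
      simp only [Finset.mem_filter, Finset.mem_univ, true_and]
      refine ⟨⟨?_, fun hmem => hx.2 ?_, hbT⟩, by trivial⟩
      · rw [Fin.lt_def]; exact hx.1
      · rw [Finset.mem_image]
        refine ⟨⟨x, _⟩, Finset.mem_filter.2 ⟨Finset.mem_univ _, hmem⟩, rfl⟩
    · rintro ⟨a, c⟩ hp
      simp only [Finset.mem_filter, Finset.mem_univ, true_and] at hp
      have hcb : c = b := hp.2
      subst hcb
      simp
    · intro x hx
      simp
  · intro b _ hb
    rw [Finset.card_eq_zero, Finset.filter_eq_empty_iff]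
    rintro p hp
    simp only [Finset.mem_filter, Finset.mem_univ, true_and] at hp
    rintro hcb
    have : p.2 = b := hcb
    exact hb (Finset.mem_filter.2 ⟨Finset.mem_univ _, this ▸ hp.2.2⟩)

lemma invS_mul {n i : ℕ} {r π : Equiv.Perm (Fin n)} (hr : Des1 r⁻¹ ⊆ {i}) (hin : i ≤ n)
    (hsupp : ∀ j : Fin n, π j ≠ j → (j : ℕ) < i) :
    invS (π * r) = invS π + invS r := by
  have hsplit : (Finset.univ.filter fun p : Fin n × Fin n =>
        p.1 < p.2 ∧ (π * r) p.2 < (π * r) p.1)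
      = (Finset.univ.filter fun p : Fin n × Fin n =>
          p.1 < p.2 ∧ (r p.1 : ℕ) < i ∧ (r p.2 : ℕ) < i ∧ (π * r) p.2 < (π * r) p.1)
        ∪ (Finset.univ.filter fun p : Fin n × Fin n =>
          p.1 < p.2 ∧ ¬ ((r p.1 : ℕ) < i) ∧ (r p.2 : ℕ) < i) := by
    ext p
    simp only [Finset.mem_filter, Finset.mem_univ, true_and, Finset.mem_union]
    simp only [Equiv.Perm.mul_apply]
    constructor
    · rintro ⟨hp, hinv⟩
      by_cases h1 : (r p.1 : ℕ) < i <;> by_cases h2 : (r p.2 : ℕ) < i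
      · exact Or.inl ⟨hp, h1, h2, hinv⟩
      · exfalso
        have e2 : π (r p.2) = r p.2 := pi_fix hsupp h2
        have e1 : (π (r p.1) : ℕ) < i := (pi_mem hsupp).2 h1
        rw [Fin.lt_def, e2] at hinv
        omega
      · exact Or.inr ⟨hp, h1, h2⟩
      · exfalso
        have e2 : π (r p.2) = r p.2 := pi_fix hsupp h2
        have e1 : π (r p.1) = r p.1 := pi_fix hsupp h1
        rw [e1, e2] at hinv
        exact absurd (rC_mono hr h1 h2 hp) (not_lt.2 hinv.le)
    · rintro (⟨hp, h1, h2, hinv⟩ | ⟨hp, h1, h2⟩)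
      · exact ⟨hp, hinv⟩
      · refine ⟨hp, ?_⟩
        have e1 : π (r p.1) = r p.1 := pi_fix hsupp h1
        have e2 : (π (r p.2) : ℕ) < i := (pi_mem hsupp).2 h2
        rw [Fin.lt_def, e1]
        omega
  have hdisj : Disjoint
      (Finset.univ.filter fun p : Fin n × Fin n =>
        p.1 < p.2 ∧ (r p.1 : ℕ) < i ∧ (r p.2 : ℕ) < i ∧ (π * r) p.2 < (π * r) p.1)
      (Finset.univ.filter fun p : Fin n × Fin n =>
        p.1 < p.2 ∧ ¬ ((r p.1 : ℕ) < i) ∧ (r p.2 : ℕ) < i) := by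
    rw [Finset.disjoint_left]
    intro p hp1 hp2
    rw [Finset.mem_filter] at hp1 hp2
    exact hp2.2.2.1 hp1.2.2.1
  rw [invS, hsplit, Finset.card_union_of_disjoint hdisj]
  congr 1
  · rw [invS]
    refine Finset.card_bij' (fun p _ => (r p.1, r p.2)) (fun p _ => (r⁻¹ p.1, r⁻¹ p.2)) ?_ ?_ ?_ ?_
    · rintro ⟨a, b⟩ hp
      simp only [Finset.mem_filter, Finset.mem_univ, true_and] at hp ⊢
      simp only [Equiv.Perm.mul_apply] at hp ⊢
      obtain ⟨hab, h1, h2, hinv⟩ := hp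
      exact ⟨rT_mono hr hin h1 h2 hab, hinv⟩
    · rintro ⟨x, y⟩ hp
      simp only [Finset.mem_filter, Finset.mem_univ, true_and] at hp ⊢
      simp only [Equiv.Perm.mul_apply, perm_apply_inv_self] at hp ⊢
      obtain ⟨hxy, hinv⟩ := hp
      have hy : (y : ℕ) < i := by
        by_contra hy
        have ey : π y = y := pi_fix hsupp hy
        by_cases hx : (x : ℕ) < i
        · have : (π x : ℕ) < i := (pi_mem hsupp).2 hx
          rw [Fin.lt_def, ey] at hinv
          rw [Fin.lt_def] at hxy
          omega
        · have ex : π x = x := pi_fix hsupp hx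
          rw [ey, ex] at hinv
          exact absurd hxy (not_lt.2 hinv.le)
      have hx : (x : ℕ) < i := by
        rw [Fin.lt_def] at hxy
        omega
      have hlt : r⁻¹ x < r⁻¹ y := by
        have := inv_low hr hin (x : ℕ) (y : ℕ) (by rwa [Fin.lt_def] at hxy) hy
        simpa using this
      refine ⟨hlt, by simpa using hx, by simpa using hy, hinv⟩
    · rintro ⟨a, b⟩ _
      simp
    · rintro ⟨x, y⟩ _
      simp
  · rw [invS, inv_filter_shuffle hr hin]

lemma r_zero_mem {n i : ℕ} {r : Equiv.Perm (Fin n)} (hr : Des1 r⁻¹ ⊆ {i}) (hin : i ≤ n)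
    (hn : 0 < n) (h : (r ⟨0, hn⟩ : ℕ) < i) : r ⟨0, hn⟩ = ⟨0, hn⟩ := by
  by_contra hne
  have hpos : 0 < (r ⟨0, hn⟩ : ℕ) := by
    rcases Nat.eq_zero_or_pos (r ⟨0, hn⟩ : ℕ) with h0 | h0
    · exact absurd (Fin.ext h0) hne
    · exact h0
  have hlt := inv_low hr hin 0 (r ⟨0, hn⟩ : ℕ) hpos h
  simp only [Fin.eta, perm_inv_apply_self] at hlt
  simp [Fin.lt_def] at hlt

lemma r_zero_not_mem {n i : ℕ} {r : Equiv.Perm (Fin n)} (hr : Des1 r⁻¹ ⊆ {i})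
    (hn : 0 < n) (hi : i < n) (h : ¬ (r ⟨0, hn⟩ : ℕ) < i) : r ⟨0, hn⟩ = ⟨i, hi⟩ := by
  rcases eq_or_lt_of_le (not_lt.1 h) with he | hlt
  · exact Fin.ext he.symm
  · exfalso
    have hlt2 := inv_high hr i (r ⟨0, hn⟩ : ℕ) le_rfl hlt (r ⟨0, hn⟩).isLt
    simp only [Fin.eta, perm_inv_apply_self] at hlt2
    simp [Fin.lt_def] at hlt2

def gfun {n : ℕ} (i : ℕ) (T : Finset (Fin n)) (hT : T.card = i) (hTc : Tᶜ.card = n - i) :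
    Fin n → Fin n :=
  fun k => if h : (k : ℕ) < i then T.orderEmbOfFin hT ⟨(k : ℕ), h⟩
    else Tᶜ.orderEmbOfFin hTc ⟨(k : ℕ) - i, by have := k.isLt; omega⟩

lemma gfun_inj {n i : ℕ} {T : Finset (Fin n)} (hT : T.card = i) (hTc : Tᶜ.card = n - i) :
    Function.Injective (gfun i T hT hTc) := by
  intro a b hab
  unfold gfun at hab
  by_cases ha : (a : ℕ) < i <;> by_cases hb : (b : ℕ) < i
  · rw [dif_pos ha, dif_pos hb] at hab
    have := (T.orderEmbOfFin hT).injective hab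
    rw [Fin.mk.injEq] at this
    exact Fin.ext this
  · rw [dif_pos ha, dif_neg hb] at hab
    exfalso
    have h1 := T.orderEmbOfFin_mem hT ⟨(a : ℕ), ha⟩
    have h2 := Tᶜ.orderEmbOfFin_mem hTc ⟨(b : ℕ) - i, by have := b.isLt; omega⟩
    rw [hab] at h1
    exact (Finset.mem_compl.1 h2) h1
  · rw [dif_neg ha, dif_pos hb] at hab
    exfalso
    have h1 := T.orderEmbOfFin_mem hT ⟨(b : ℕ), hb⟩
    have h2 := Tᶜ.orderEmbOfFin_mem hTc ⟨(a : ℕ) - i, by have := a.isLt; omega⟩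
    rw [← hab] at h1
    exact (Finset.mem_compl.1 h2) h1
  · rw [dif_neg ha, dif_neg hb] at hab
    have := (Tᶜ.orderEmbOfFin hTc).injective hab
    rw [Fin.mk.injEq] at this
    exact Fin.ext (by omega)

/-- The shuffle permutation associated to a set of positions. -/
noncomputable def shuffleOf {n : ℕ} (i : ℕ) (T : Finset (Fin n)) : Equiv.Perm (Fin n) :=
  if h : T.card = i ∧ Tᶜ.card = n - i then
    (Equiv.ofBijective _ ((Finite.injective_iff_bijective).1 (gfun_inj h.1 h.2)))⁻¹
  else 1

lemma compl_card {n i : ℕ} {T : Finset (Fin n)} (hT : T.card = i) : Tᶜ.card = n - i := by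
  rw [Finset.card_compl, hT, Fintype.card_fin]

lemma shuffleOf_inv_apply {n i : ℕ} {T : Finset (Fin n)} (hT : T.card = i) (k : Fin n) :
    (shuffleOf i T)⁻¹ k = gfun i T hT (compl_card hT) k := by
  rw [shuffleOf, dif_pos ⟨hT, compl_card hT⟩, inv_inv]
  rfl

lemma shuffleOf_des {n i : ℕ} {T : Finset (Fin n)} (hT : T.card = i) :
    Des1 (shuffleOf i T)⁻¹ ⊆ {i} := by
  intro t ht
  rw [Des1, Finset.mem_filter, Finset.mem_Ico] at ht
  obtain ⟨⟨ht1, ht2⟩, htn, hlt⟩ := ht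
  rw [Finset.mem_singleton]
  rw [shuffleOf_inv_apply hT, shuffleOf_inv_apply hT] at hlt
  by_contra hti
  rw [gfun, gfun] at hlt
  split_ifs at hlt with h1 h2 h2
  · exact absurd hlt (not_lt.2 ((T.orderEmbOfFin hT).strictMono
      (Fin.mk_lt_mk.2 (show t - 1 < t by omega))).le)
  · have h1' : t < i := h1
    have h2' : ¬ t - 1 < i := h2
    omega
  · have h1' : ¬ t < i := h1
    have h2' : t - 1 < i := h2
    omega
  · exact absurd hlt (not_lt.2 ((Tᶜ.orderEmbOfFin (compl_card hT)).strictMono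
      (Fin.mk_lt_mk.2 (show t - 1 - i < t - i by
        have h1' : ¬ t < i := h1
        have h2' : ¬ t - 1 < i := h2
        omega))).le)

lemma shuffleOf_mem {n i : ℕ} {T : Finset (Fin n)} (hT : T.card = i) (j : Fin n) :
    ((shuffleOf i T) j : ℕ) < i ↔ j ∈ T := by
  set r := shuffleOf i T with hrdef
  have key : ∀ k : Fin n, ((k : ℕ) < i → r⁻¹ k ∈ T) ∧ (¬ (k : ℕ) < i → r⁻¹ k ∉ T) := by
    intro k
    constructor
    · intro hk
      rw [shuffleOf_inv_apply hT, gfun, dif_pos hk]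
      exact T.orderEmbOfFin_mem hT _
    · intro hk
      rw [shuffleOf_inv_apply hT, gfun, dif_neg hk]
      exact Finset.mem_compl.1 (Tᶜ.orderEmbOfFin_mem (compl_card hT) _)
  constructor
  · intro h
    have := (key (r j)).1 h
    rwa [perm_inv_apply_self] at this
  · intro h
    by_contra hlt
    have := (key (r j)).2 hlt
    rw [perm_inv_apply_self] at this
    exact this h

lemma shuffle_unique {n i : ℕ} {r1 r2 : Equiv.Perm (Fin n)} (h1r : Des1 r1⁻¹ ⊆ {i})
    (h2r : Des1 r2⁻¹ ⊆ {i}) (hin : i ≤ n)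
    (hEq : ∀ j : Fin n, (r1 j : ℕ) < i ↔ (r2 j : ℕ) < i) : r1 = r2 := by
  set T := Finset.univ.filter fun j : Fin n => (r1 j : ℕ) < i with hTdef
  have hcard : T.card = i := Tset_card hin
  have hmemT : ∀ j : Fin n, j ∈ T ↔ (r1 j : ℕ) < i := by
    intro j; rw [hTdef, Finset.mem_filter]; simp
  have hinv : r1⁻¹ = r2⁻¹ := by
    have key : ∀ (r : Equiv.Perm (Fin n)), Des1 r⁻¹ ⊆ {i} →
        (∀ j : Fin n, j ∈ T ↔ (r j : ℕ) < i) →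
        (∀ x : Fin i, r⁻¹ ⟨(x : ℕ), lt_of_lt_of_le x.isLt hin⟩ = T.orderEmbOfFin hcard x)
        ∧ (∀ x : Fin (n - i), r⁻¹ ⟨i + (x : ℕ), by have := x.isLt; omega⟩
            = Tᶜ.orderEmbOfFin (compl_card hcard) x) := by
      intro r hr hmem
      constructor
      · have := Finset.orderEmbOfFin_unique (f := fun x : Fin i =>
            r⁻¹ ⟨(x : ℕ), lt_of_lt_of_le x.isLt hin⟩) hcard
          (fun x => by
            rw [hmem]
            simp [perm_apply_inv_self, x.isLt])
          (fun x y hxy => inv_low hr hin (x : ℕ) (y : ℕ) hxy y.isLt)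
        intro x
        exact congrFun this x
      · have := Finset.orderEmbOfFin_unique (f := fun x : Fin (n - i) =>
            r⁻¹ ⟨i + (x : ℕ), by have := x.isLt; omega⟩) (compl_card hcard)
          (fun x => by
            rw [Finset.mem_compl, hmem]
            simp)
          (fun x y hxy => inv_high hr (i + (x : ℕ)) (i + (y : ℕ)) (by omega)
            (by rw [Fin.lt_def] at hxy; omega) (by have := y.isLt; omega))
        intro x
        exact congrFun this x
    obtain ⟨k1low, k1high⟩ := key r1 h1r (fun j => (hmemT j))
    obtain ⟨k2low, k2high⟩ := key r2 h2r (fun j => (hmemT j).trans (hEq j))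
    apply Equiv.ext
    intro k
    by_cases hk : (k : ℕ) < i
    · have e1 := k1low ⟨(k : ℕ), hk⟩
      have e2 := k2low ⟨(k : ℕ), hk⟩
      simp only [Fin.eta] at e1 e2
      rw [e1, e2]
    · have hk2 : (k : ℕ) - i < n - i := by have := k.isLt; omega
      have e1 := k1high ⟨(k : ℕ) - i, hk2⟩
      have e2 := k2high ⟨(k : ℕ) - i, hk2⟩
      have hkk : (⟨i + ((k : ℕ) - i), by have := k.isLt; omega⟩ : Fin n) = k :=
        Fin.ext (by simp; omega)
      rw [hkk] at e1 e2
      rw [e1, e2]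
  calc r1 = (r1⁻¹)⁻¹ := (inv_inv r1).symm
    _ = (r2⁻¹)⁻¹ := by rw [hinv]
    _ = r2 := inv_inv r2

lemma cond_iff_notmem {n i : ℕ} {r π : Equiv.Perm (Fin n)} (hr : Des1 r⁻¹ ⊆ {i})
    (h1 : 1 ≤ i) (hii : i < n) (hsupp : ∀ j : Fin n, π j ≠ j → (j : ℕ) < i) :
    ((π * r) ⟨0, by omega⟩ = ⟨i, hii⟩) ↔ ¬ ((r ⟨0, by omega⟩ : ℕ) < i) := by
  have hn : 0 < n := by omega
  have hπi : π ⟨i, hii⟩ = ⟨i, hii⟩ := pi_fix hsupp (by simp)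
  constructor
  · intro h hmem
    rw [Equiv.Perm.mul_apply, r_zero_mem hr (le_of_lt hii) hn hmem] at h
    have h2 : π ⟨0, hn⟩ = π ⟨i, hii⟩ := h.trans hπi.symm
    have h3 := π.injective h2
    rw [Fin.ext_iff] at h3
    simp at h3
    omega
  · intro hmem
    rw [Equiv.Perm.mul_apply, r_zero_not_mem hr hn hii hmem, hπi]

lemma cond_iff_mem {n i : ℕ} {r π : Equiv.Perm (Fin n)} (hr : Des1 r⁻¹ ⊆ {i})
    (h1 : 1 ≤ i) (hii : i < n) (hsupp : ∀ j : Fin n, π j ≠ j → (j : ℕ) < i) :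
    ((π * r) ⟨0, by omega⟩ = π ⟨0, by omega⟩) ↔ ((r ⟨0, by omega⟩ : ℕ) < i) := by
  have hn : 0 < n := by omega
  constructor
  · intro h
    have h2 : r ⟨0, hn⟩ = ⟨0, hn⟩ := π.injective h
    rw [show (⟨0, by omega⟩ : Fin n) = ⟨0, hn⟩ from rfl, h2]
    exact h1
  · intro hmem
    rw [Equiv.Perm.mul_apply, r_zero_mem hr (le_of_lt hii) hn hmem]

lemma val_filter_image {n : ℕ} {U : Finset ℕ} (hU : ∀ x ∈ U, x < n) :
    ((Finset.univ.filter fun a : Fin n => (a : ℕ) ∈ U).image Fin.val) = U := by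
  ext x
  simp only [Finset.mem_image, Finset.mem_filter, Finset.mem_univ, true_and]
  constructor
  · rintro ⟨a, ha, rfl⟩; exact ha
  · intro hx; exact ⟨⟨x, hU x hx⟩, hx, rfl⟩

lemma val_filter_card {n : ℕ} {U : Finset ℕ} (hU : ∀ x ∈ U, x < n) :
    (Finset.univ.filter fun a : Fin n => (a : ℕ) ∈ U).card = U.card := by
  rw [← Finset.card_image_of_injective
    (Finset.univ.filter fun a : Fin n => (a : ℕ) ∈ U) Fin.val_injective, val_filter_image hU]

lemma Tset_shuffleOf {n i : ℕ} {T : Finset (Fin n)} (hT : T.card = i) :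
    (Finset.univ.filter fun j : Fin n => ((shuffleOf i T j : ℕ) < i)) = T := by
  ext j
  rw [Finset.mem_filter, shuffleOf_mem hT]
  simp

lemma image_succ_pred {S : Finset ℕ} (h0 : 0 ∉ S) : (S.image (· - 1)).image (· + 1) = S := by
  rw [Finset.image_image]
  ext x
  simp only [Finset.mem_image, Function.comp_apply]
  constructor
  · rintro ⟨y, hy, rfl⟩
    have : y ≠ 0 := fun h => h0 (h ▸ hy)
    have he : y - 1 + 1 = y := by omega
    rwa [he]
  · intro hx
    have : x ≠ 0 := fun h => h0 (h ▸ hx)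
    exact ⟨x, hx, by omega⟩

lemma image_pred_succ (S : Finset ℕ) : (S.image (· + 1)).image (· - 1) = S := by
  rw [Finset.image_image]
  ext x
  simp only [Finset.mem_image, Function.comp_apply]
  constructor
  · rintro ⟨y, hy, rfl⟩
    simpa using hy
  · intro hx
    exact ⟨x, hx, by omega⟩

end Aux17

/-- For `1 ≤ i ≤ n-1` and `π ∈ S_n` with `supp(π) ⊆ [i]`, summing over `{i}`-shuffles `r`:
restricted to `πr(1) = i+1` the length sum is `q^i [n-1 choose i]_q`, and restricted to
`πr(1) = π(1)` it is `[n-1 choose i-1]_q`. -/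
theorem stmt17 (n i : ℕ) (h1 : 1 ≤ i) (h2 : i ≤ n - 1) (π : Equiv.Perm (Fin n))
    (hsupp : ∀ j : Fin n, π j ≠ j → (j : ℕ) < i) (R : Type*) [CommRing R] (q : R) :
    (∑ r ∈ Finset.univ.filter (fun r : Equiv.Perm (Fin n) =>
          Des1 r⁻¹ ⊆ {i} ∧ (π * r) ⟨0, by omega⟩ = ⟨i, by omega⟩),
        q ^ (invS (π * r) - invS π)) = q ^ i * qbinom q (n - 1) i ∧
    (∑ r ∈ Finset.univ.filter (fun r : Equiv.Perm (Fin n) =>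
          Des1 r⁻¹ ⊆ {i} ∧ (π * r) ⟨0, by omega⟩ = π ⟨0, by omega⟩),
        q ^ (invS (π * r) - invS π)) = qbinom q (n - 1) (i - 1) := by
  
  have hn : 0 < n := by omega
  have hin : i ≤ n := by omega
  have hii : i < n := by omega
  -- abbreviation facts
  have hSvlt : ∀ r : Equiv.Perm (Fin n),
      ∀ x ∈ (Finset.univ.filter fun j : Fin n => ((r j : ℕ) < i)).image Fin.val, x < n := by
    intro r x hx
    obtain ⟨a, _, rfl⟩ := Finset.mem_image.1 hx
    exact a.isLt
  have hSvcard : ∀ r : Equiv.Perm (Fin n),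
      ((Finset.univ.filter fun j : Fin n => ((r j : ℕ) < i)).image Fin.val).card = i := by
    intro r
    rw [Finset.card_image_of_injective _ Fin.val_injective, Tset_card hin]
  have hmem0 : ∀ r : Equiv.Perm (Fin n),
      (0 ∈ ((Finset.univ.filter fun j : Fin n => ((r j : ℕ) < i)).image Fin.val)
        ↔ ((r ⟨0, hn⟩ : ℕ) < i)) := by
    intro r
    have h := mem_val_image (T := Finset.univ.filter fun j : Fin n => ((r j : ℕ) < i))
      (a := ⟨0, hn⟩)
    rw [show ((⟨0, hn⟩ : Fin n) : ℕ) = 0 from rfl] at h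
    rw [h, Finset.mem_filter]
    simp
  have hback : ∀ r : Equiv.Perm (Fin n), Des1 r⁻¹ ⊆ {i} →
      shuffleOf i (Finset.univ.filter fun a : Fin n =>
        (a : ℕ) ∈ (Finset.univ.filter fun j : Fin n => ((r j : ℕ) < i)).image Fin.val) = r := by
    intro r hr
    have hT'card : (Finset.univ.filter fun a : Fin n =>
        (a : ℕ) ∈ (Finset.univ.filter fun j : Fin n => ((r j : ℕ) < i)).image Fin.val).card
        = i := by
      rw [val_filter_card (hSvlt r), hSvcard r]
    refine shuffle_unique (shuffleOf_des hT'card) hr hin (fun j => ?_)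
    rw [shuffleOf_mem hT'card, Finset.mem_filter, mem_val_image, Finset.mem_filter]
    simp
  constructor
  · -- first sum : condition (π r)(0) = i, i.e. 0 ∉ T
    rw [← sum_cross q (n - 1) i, Finset.mul_sum]
    refine Finset.sum_nbij'
      (i := fun r => ((Finset.univ.filter fun j : Fin n =>
        ((r j : ℕ) < i)).image Fin.val).image (· - 1))
      (j := fun S => shuffleOf i (Finset.univ.filter fun a : Fin n =>
        (a : ℕ) ∈ S.image (· + 1)))
      ?_ ?_ ?_ ?_ ?_
    · -- forward membership
      intro r hr
      rw [Finset.mem_filter] at hr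
      obtain ⟨-, hdes, hcond⟩ := hr
      have h0 : ¬ ((r ⟨0, hn⟩ : ℕ) < i) := (cond_iff_notmem hdes h1 hii hsupp).1 hcond
      have h0' : 0 ∉ (Finset.univ.filter fun j : Fin n => ((r j : ℕ) < i)).image Fin.val :=
        fun hx => h0 ((hmem0 r).1 hx)
      rw [Finset.mem_powersetCard]
      constructor
      · intro x hx
        obtain ⟨s, hs, rfl⟩ := Finset.mem_image.1 hx
        have hs0 : s ≠ 0 := fun h => h0' (h ▸ hs)
        have hsn : s < n := hSvlt r s hs
        rw [Finset.mem_range]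
        omega
      · rw [card_image_pred h0', hSvcard r]
    · -- backward membership
      intro S hS
      rw [Finset.mem_powersetCard] at hS
      obtain ⟨hSsub, hScard⟩ := hS
      have hU : ∀ x ∈ S.image (· + 1), x < n := by
        intro x hx
        obtain ⟨s, hs, rfl⟩ := Finset.mem_image.1 hx
        have := Finset.mem_range.1 (hSsub hs)
        omega
      have hT'card : (Finset.univ.filter fun a : Fin n =>
          (a : ℕ) ∈ S.image (· + 1)).card = i := by
        rw [val_filter_card hU, Finset.card_image_of_injOn (fun a _ b _ h => by omega), hScard]
      rw [Finset.mem_filter]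
      refine ⟨Finset.mem_univ _, shuffleOf_des hT'card,
        (cond_iff_notmem (shuffleOf_des hT'card) h1 hii hsupp).2 ?_⟩
      rw [shuffleOf_mem hT'card, Finset.mem_filter]
      rintro ⟨-, hx⟩
      obtain ⟨s, -, hs⟩ := Finset.mem_image.1 hx
      simp at hs
    · -- left inverse
      intro r hr
      rw [Finset.mem_filter] at hr
      obtain ⟨-, hdes, hcond⟩ := hr
      have h0 : ¬ ((r ⟨0, hn⟩ : ℕ) < i) := (cond_iff_notmem hdes h1 hii hsupp).1 hcond
      have h0' : 0 ∉ (Finset.univ.filter fun j : Fin n => ((r j : ℕ) < i)).image Fin.val :=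
        fun hx => h0 ((hmem0 r).1 hx)
      rw [image_succ_pred h0']
      exact hback r hdes
    · -- right inverse
      intro S hS
      rw [Finset.mem_powersetCard] at hS
      obtain ⟨hSsub, hScard⟩ := hS
      have hU : ∀ x ∈ S.image (· + 1), x < n := by
        intro x hx
        obtain ⟨s, hs, rfl⟩ := Finset.mem_image.1 hx
        have := Finset.mem_range.1 (hSsub hs)
        omega
      have hT'card : (Finset.univ.filter fun a : Fin n =>
          (a : ℕ) ∈ S.image (· + 1)).card = i := by
        rw [val_filter_card hU, Finset.card_image_of_injOn (fun a _ b _ h => by omega), hScard]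
      rw [Tset_shuffleOf hT'card, val_filter_image hU, image_pred_succ]
    · -- values
      intro r hr
      rw [Finset.mem_filter] at hr
      obtain ⟨-, hdes, hcond⟩ := hr
      have h0 : ¬ ((r ⟨0, hn⟩ : ℕ) < i) := (cond_iff_notmem hdes h1 hii hsupp).1 hcond
      have h0' : 0 ∉ (Finset.univ.filter fun j : Fin n => ((r j : ℕ) < i)).image Fin.val :=
        fun hx => h0 ((hmem0 r).1 hx)
      rw [invS_mul hdes hin hsupp, Nat.add_sub_cancel_left, invS_shuffle hdes hin,
        crossN_shift h0', hSvcard r, pow_add]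
      ring
  · -- second sum : condition (π r)(0) = π(0), i.e. 0 ∈ T
    rw [← sum_cross q (n - 1) (i - 1)]
    refine Finset.sum_nbij'
      (i := fun r => (((Finset.univ.filter fun j : Fin n =>
        ((r j : ℕ) < i)).image Fin.val).erase 0).image (· - 1))
      (j := fun S => shuffleOf i (Finset.univ.filter fun a : Fin n =>
        (a : ℕ) ∈ insert 0 (S.image (· + 1))))
      ?_ ?_ ?_ ?_ ?_
    · -- forward membership
      intro r hr
      rw [Finset.mem_filter] at hr
      obtain ⟨-, hdes, hcond⟩ := hr
      have h0 : ((r ⟨0, hn⟩ : ℕ) < i) := (cond_iff_mem hdes h1 hii hsupp).1 hcond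
      have h0' : 0 ∈ (Finset.univ.filter fun j : Fin n => ((r j : ℕ) < i)).image Fin.val :=
        (hmem0 r).2 h0
      rw [Finset.mem_powersetCard]
      constructor
      · intro x hx
        obtain ⟨s, hs, rfl⟩ := Finset.mem_image.1 hx
        rw [Finset.mem_erase] at hs
        have hsn : s < n := hSvlt r s hs.2
        have hs0 : s ≠ 0 := hs.1
        rw [Finset.mem_range]
        omega
      · rw [card_image_pred (Finset.notMem_erase _ _), Finset.card_erase_of_mem h0',
          hSvcard r]
    · -- backward membership
      intro S hS
      rw [Finset.mem_powersetCard] at hS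
      obtain ⟨hSsub, hScard⟩ := hS
      have hU : ∀ x ∈ insert 0 (S.image (· + 1)), x < n := by
        intro x hx
        rcases Finset.mem_insert.1 hx with rfl | hx
        · omega
        · obtain ⟨s, hs, rfl⟩ := Finset.mem_image.1 hx
          have := Finset.mem_range.1 (hSsub hs)
          omega
      have hT'card : (Finset.univ.filter fun a : Fin n =>
          (a : ℕ) ∈ insert 0 (S.image (· + 1))).card = i := by
        rw [val_filter_card hU, Finset.card_insert_of_notMem (by
          intro hx
          obtain ⟨s, -, hs⟩ := Finset.mem_image.1 hx
          simp at hs),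
          Finset.card_image_of_injOn (fun a _ b _ h => by omega), hScard]
        omega
      rw [Finset.mem_filter]
      refine ⟨Finset.mem_univ _, shuffleOf_des hT'card,
        (cond_iff_mem (shuffleOf_des hT'card) h1 hii hsupp).2 ?_⟩
      rw [shuffleOf_mem hT'card, Finset.mem_filter]
      exact ⟨Finset.mem_univ _, Finset.mem_insert_self 0 _⟩
    · -- left inverse
      intro r hr
      rw [Finset.mem_filter] at hr
      obtain ⟨-, hdes, hcond⟩ := hr
      have h0 : ((r ⟨0, hn⟩ : ℕ) < i) := (cond_iff_mem hdes h1 hii hsupp).1 hcond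
      have h0' : 0 ∈ (Finset.univ.filter fun j : Fin n => ((r j : ℕ) < i)).image Fin.val :=
        (hmem0 r).2 h0
      rw [image_succ_pred (Finset.notMem_erase _ _), Finset.insert_erase h0']
      exact hback r hdes
    · -- right inverse
      intro S hS
      rw [Finset.mem_powersetCard] at hS
      obtain ⟨hSsub, hScard⟩ := hS
      have hU : ∀ x ∈ insert 0 (S.image (· + 1)), x < n := by
        intro x hx
        rcases Finset.mem_insert.1 hx with rfl | hx
        · omega
        · obtain ⟨s, hs, rfl⟩ := Finset.mem_image.1 hx
          have := Finset.mem_range.1 (hSsub hs)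
          omega
      have hT'card : (Finset.univ.filter fun a : Fin n =>
          (a : ℕ) ∈ insert 0 (S.image (· + 1))).card = i := by
        rw [val_filter_card hU, Finset.card_insert_of_notMem (by
          intro hx
          obtain ⟨s, -, hs⟩ := Finset.mem_image.1 hx
          simp at hs),
          Finset.card_image_of_injOn (fun a _ b _ h => by omega), hScard]
        omega
      rw [Tset_shuffleOf hT'card, val_filter_image hU, Finset.erase_insert (by
        intro hx
        obtain ⟨s, -, hs⟩ := Finset.mem_image.1 hx
        simp at hs), image_pred_succ]
    · -- values
      intro r hr
      rw [Finset.mem_filter] at hr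
      obtain ⟨-, hdes, hcond⟩ := hr
      have h0 : ((r ⟨0, hn⟩ : ℕ) < i) := (cond_iff_mem hdes h1 hii hsupp).1 hcond
      have h0' : 0 ∈ (Finset.univ.filter fun j : Fin n => ((r j : ℕ) < i)).image Fin.val :=
        (hmem0 r).2 h0
      rw [invS_mul hdes hin hsupp, Nat.add_sub_cancel_left, invS_shuffle hdes hin,
        crossN_shift0 h0']
end
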